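/- arXiv:1809.10050 — 5 statements merged into one kernel-verified Lean document; each statement's English description precedes it below -/
import Mathlib

section
/- Let $X \subseteq \mathbb{R}^n$ be nonempty, compact and convex, $f: \mathbb{R}^n \to \mathbb{R}$ convex, and $h: \mathbb{R}^n \to \mathbb{R}$ strongly convex with parameter $\mu_h > 0$. For $\lambda > 0$, let $x_\lambda^*$ denote the unique minimizer of $f + \lambda h$ over $X$. Then for any $\lambda_1, \lambda_2 > 0$, $\|x_{\lambda_2}^* - x_{\lambda_1}^*\| \leq \frac{C_h}{\mu_h} |1 - \lambda_1/\lambda_2|$, where $C_h$ is a bound on the norms of subgradients of $h$ over $X$. -/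
/-! Move from each minimizer a fraction `t` of the way towards the other, and let `Δ₁`, `Δ₂` be
the resulting increments of `h`. Optimality of `x₁` for `f + λ₁ h` and of `x₂` for `f + λ₂ h`,
together with convexity of `f`, give `λ₁ Δ₁ + λ₂ Δ₂ ≥ 0`, while `μ`-strong convexity of `h` gives
`Δ₁ + Δ₂ ≤ -t (1 - t) μ ‖x₂ - x₁‖²`. Eliminating `Δ₂` leaves
`t (1 - t) λ₂ μ ‖x₂ - x₁‖² ≤ (λ₁ - λ₂) Δ₁ ≤ |λ₁ - λ₂| t C_h ‖x₂ - x₁‖`, since subgradients bounded by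
`C_h` make `h` `C_h`-Lipschitz on `X`. Divide by `t` and let `t → 0`. -/

open Filter Finset Real Set
open scoped RealInnerProductSpace Topology BigOperators

noncomputable section

abbrev Euc (n : ℕ) := EuclideanSpace ℝ (Fin n)

/-- `g` is a subgradient of `f` at `x`. -/
def IsSubgradAt {n : ℕ} (f : Euc n → ℝ) (x g : Euc n) : Prop :=
  ∀ y, f x + (inner ℝ g (y - x) : ℝ) ≤ f y

/-- `y` is the Euclidean projection of `p` onto `X`. -/
def IsProjOn {n : ℕ} (X : Set (Euc n)) (p y : Euc n) : Prop :=
  y ∈ X ∧ ∀ z ∈ X, ‖p - y‖ ≤ ‖p - z‖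

open scoped NNReal

section Supporting

variable {E : Type*} [NormedAddCommGroup E] [NormedSpace ℝ E] {h : E → ℝ}

lemma ConvexOn.convex_strictEpigraph (hh : ConvexOn ℝ univ h) :
    Convex ℝ {p : E × ℝ | h p.1 < p.2} := by
  have hconv : ConvexOn ℝ univ (fun p : E × ℝ ↦ h p.1 - p.2) :=
    (hh.comp_linearMap (LinearMap.fst ℝ E ℝ)).sub ((LinearMap.snd ℝ E ℝ).concaveOn convex_univ)
  simpa [sub_neg] using hconv.convex_lt 0

/-- The functional separating `(x, h x)` from the open strict epigraph has a negative vertical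
component `c`; its horizontal part divided by `-c` supports `h` at `x`. -/
theorem ConvexOn.exists_strongDual_add_le (hh : ConvexOn ℝ univ h) (hcont : Continuous h)
    (x : E) : ∃ ℓ : StrongDual ℝ E, ∀ y, h x + ℓ (y - x) ≤ h y := by
  obtain ⟨φ, hφ⟩ := geometric_hahn_banach_open_point hh.convex_strictEpigraph
    (isOpen_lt (hcont.comp continuous_fst) continuous_snd) (x := (x, h x)) (lt_irrefl (h x))
  set c := φ (0, 1)
  have hφ_apply : ∀ y s, φ (y, s) = φ (y, 0) + s * c := fun y s ↦ by
    rw [show ((y, s) : E × ℝ) = (y, 0) + s • (0, 1) by simp, map_add, map_smul, smul_eq_mul]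
  have hc : c < 0 := by
    have := hφ (x, h x + 1) (by simp)
    rw [hφ_apply x, hφ_apply x (h x)] at this
    linarith
  have hsupp : ∀ y, φ (y, 0) + h y * c ≤ φ (x, 0) + h x * c := fun y ↦ by
    refine le_of_forall_pos_lt_add fun δ hδ ↦ ?_
    have := hφ (y, h y + δ / -c) (by simp [hδ, hc])
    rw [hφ_apply y, hφ_apply x (h x), add_mul, div_neg, neg_mul, div_mul_cancel₀ δ hc.ne] at this
    linarith
  refine ⟨(-c⁻¹) • φ.comp (ContinuousLinearMap.inl ℝ E ℝ), fun y ↦ ?_⟩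
  have hinv : c⁻¹ * c = 1 := inv_mul_cancel₀ hc.ne
  have := mul_le_mul_of_nonneg_left (hsupp y) (neg_nonneg.2 (inv_nonpos.2 hc.le))
  simp only [smul_apply, ContinuousLinearMap.comp_apply,
    ContinuousLinearMap.inl_apply, smul_eq_mul]
  rw [show ((y - x, 0) : E × ℝ) = (y, 0) - (x, 0) by simp, map_sub]
  linear_combination this + (h y - h x) * hinv

end Supporting

lemma StrongConvexOn.subset {E : Type*} [NormedAddCommGroup E] [NormedSpace ℝ E] {s t : Set E}
    {μ : ℝ} {h : E → ℝ} (hh : StrongConvexOn t μ h) (hst : s ⊆ t) (hs : Convex ℝ s) :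
    StrongConvexOn s μ h :=
  ⟨hs, fun _ hx _ hy ↦ hh.2 (hst hx) (hst hy)⟩

section Segment

variable {E : Type*} [NormedAddCommGroup E] [NormedSpace ℝ E] {X : Set E} {f h : E → ℝ}
  {μ l : ℝ} {x z : E} {t : ℝ}

lemma IsMinOn.mul_sub_le_of_convexOn (hmin : IsMinOn (fun y ↦ f y + l * h y) X x)
    (hf : ConvexOn ℝ X f) (hx : x ∈ X) (hz : z ∈ X) (ht₀ : 0 ≤ t) (ht₁ : t ≤ 1) :
    t * (f x - f z) ≤ l * (h ((1 - t) • x + t • z) - h x) := by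
  have hseg := hf.1 hx hz (sub_nonneg.2 ht₁) ht₀ (sub_add_cancel 1 t)
  have hmin' := isMinOn_iff.1 hmin _ hseg
  have hf_seg := hf.2 hx hz (sub_nonneg.2 ht₁) ht₀ (sub_add_cancel 1 t)
  simp only [smul_eq_mul] at hf_seg hmin'
  linarith

lemma StrongConvexOn.sub_le_of_mem_segment (hh : StrongConvexOn X μ h) (hx : x ∈ X) (hz : z ∈ X)
    (ht₀ : 0 ≤ t) (ht₁ : t ≤ 1) :
    h ((1 - t) • x + t • z) - h x ≤ t * (h z - h x - (1 - t) * (μ / 2 * ‖x - z‖ ^ 2)) := by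
  have := hh.2 hx hz (sub_nonneg.2 ht₁) ht₀ (sub_add_cancel 1 t)
  simp only [smul_eq_mul] at this
  linarith

lemma LipschitzOnWith.abs_sub_le_of_mem_segment {K : ℝ≥0} (hK : LipschitzOnWith K h X)
    (hX : Convex ℝ X) (hx : x ∈ X) (hz : z ∈ X) (ht₀ : 0 ≤ t) (ht₁ : t ≤ 1) :
    |h ((1 - t) • x + t • z) - h x| ≤ t * (K * ‖x - z‖) := by
  have := hK.dist_le_mul _ (hX hx hz (sub_nonneg.2 ht₁) ht₀ (sub_add_cancel 1 t)) _ hx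
  rwa [Real.dist_eq, dist_eq_norm, show (1 - t) • x + t • z - x = t • (z - x) by module,
    norm_smul, Real.norm_of_nonneg ht₀, norm_sub_rev, mul_left_comm] at this

end Segment

lemma le_of_forall_one_sub_mul_le {a b : ℝ} (h : ∀ t ∈ Ioo (0 : ℝ) 1, (1 - t) * a ≤ b) :
    a ≤ b := by
  have hlim : Tendsto (fun t : ℝ ↦ (1 - t) * a) (𝓝[>] 0) (𝓝 a) := by
    have : Continuous (fun t : ℝ ↦ (1 - t) * a) := by fun_prop
    simpa using (this.tendsto 0).mono_left nhdsWithin_le_nhds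
  exact le_of_tendsto hlim (Filter.mem_of_superset (Ioo_mem_nhdsGT one_pos) h)

section Drift

variable {E : Type*} [NormedAddCommGroup E] [NormedSpace ℝ E] {X : Set E} {f h : E → ℝ}
  {μ l₁ l₂ : ℝ} {K : ℝ≥0} {x₁ x₂ : E}

lemma one_sub_mul_le_of_isMinOn (hf : ConvexOn ℝ X f) (hh : StrongConvexOn X μ h)
    (hK : LipschitzOnWith K h X) (hl₂ : 0 ≤ l₂) (hx₁ : x₁ ∈ X) (hx₂ : x₂ ∈ X)
    (h₁ : IsMinOn (fun y ↦ f y + l₁ * h y) X x₁) (h₂ : IsMinOn (fun y ↦ f y + l₂ * h y) X x₂)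
    {t : ℝ} (ht : t ∈ Ioo (0 : ℝ) 1) :
    (1 - t) * (l₂ * μ * ‖x₂ - x₁‖ ^ 2) ≤ K * |l₁ - l₂| * ‖x₂ - x₁‖ := by
  obtain ⟨ht₀, ht₁⟩ := ht
  set D := ‖x₂ - x₁‖
  set Δ₁ := h ((1 - t) • x₁ + t • x₂) - h x₁
  have hmin₁ := h₁.mul_sub_le_of_convexOn hf hx₁ hx₂ ht₀.le ht₁.le
  have hmin₂ := h₂.mul_sub_le_of_convexOn hf hx₂ hx₁ ht₀.le ht₁.le
  have hconv₁ := hh.sub_le_of_mem_segment hx₁ hx₂ ht₀.le ht₁.le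
  have hconv₂ := hh.sub_le_of_mem_segment hx₂ hx₁ ht₀.le ht₁.le
  rw [norm_sub_rev] at hconv₁
  have hΔ₁ : |Δ₁| ≤ t * (K * D) := by
    simpa only [D, norm_sub_rev] using hK.abs_sub_le_of_mem_segment hf.1 hx₁ hx₂ ht₀.le ht₁.le
  have hdrift : t * ((1 - t) * (l₂ * μ * D ^ 2)) ≤ (l₁ - l₂) * Δ₁ := by
    linarith [mul_le_mul_of_nonneg_left (add_le_add hconv₁ hconv₂) hl₂]
  have hΔ₁_le : (l₁ - l₂) * Δ₁ ≤ t * (K * |l₁ - l₂| * D) := by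
    calc (l₁ - l₂) * Δ₁ ≤ |l₁ - l₂| * |Δ₁| := by rw [← abs_mul]; exact le_abs_self _
      _ ≤ |l₁ - l₂| * (t * (K * D)) := mul_le_mul_of_nonneg_left hΔ₁ (abs_nonneg _)
      _ = t * (K * |l₁ - l₂| * D) := by ring
  exact le_of_mul_le_mul_left (hdrift.trans hΔ₁_le) ht₀

theorem mul_norm_sub_le_of_isMinOn (hf : ConvexOn ℝ X f) (hh : StrongConvexOn X μ h)
    (hK : LipschitzOnWith K h X) (hl₂ : 0 ≤ l₂) (hx₁ : x₁ ∈ X) (hx₂ : x₂ ∈ X)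
    (h₁ : IsMinOn (fun y ↦ f y + l₁ * h y) X x₁) (h₂ : IsMinOn (fun y ↦ f y + l₂ * h y) X x₂) :
    l₂ * μ * ‖x₂ - x₁‖ ≤ K * |l₁ - l₂| := by
  have hsq := le_of_forall_one_sub_mul_le fun t ht ↦
    one_sub_mul_le_of_isMinOn hf hh hK hl₂ hx₁ hx₂ h₁ h₂ ht
  rcases (norm_nonneg (x₂ - x₁)).eq_or_lt with hD | hD
  · rw [← hD, mul_zero]; positivity
  · exact le_of_mul_le_mul_right (by linear_combination hsq) hD

end Drift

section Subgradient

variable {n : ℕ} {h : Euc n → ℝ}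

lemma exists_isSubgradAt (hh : ConvexOn ℝ univ h) (x : Euc n) : ∃ g, IsSubgradAt h x g := by
  obtain ⟨ℓ, hℓ⟩ := hh.exists_strongDual_add_le
    (continuousOn_univ.1 (hh.continuousOn isOpen_univ)) x
  refine ⟨(InnerProductSpace.toDual ℝ (Euc n)).symm ℓ, fun y ↦ ?_⟩
  simpa only [InnerProductSpace.toDual_symm_apply] using hℓ y

lemma IsSubgradAt.sub_le_norm_mul {x g : Euc n} (hg : IsSubgradAt h x g) (y : Euc n) :
    h x - h y ≤ ‖g‖ * ‖x - y‖ := by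
  have : -⟪g, y - x⟫ ≤ ‖g‖ * ‖x - y‖ := by
    rw [← inner_neg_right, neg_sub]
    exact real_inner_le_norm g (x - y)
  linarith [hg y]

lemma lipschitzOnWith_of_forall_isSubgradAt {X : Set (Euc n)} {K : ℝ≥0}
    (hK : ∀ x ∈ X, ∃ g, IsSubgradAt h x g ∧ ‖g‖ ≤ K) : LipschitzOnWith K h X := by
  refine LipschitzOnWith.of_dist_le_mul fun x hx y hy ↦ ?_
  obtain ⟨g, hg, hgK⟩ := hK x hx
  obtain ⟨g', hg', hg'K⟩ := hK y hy
  rw [Real.dist_eq, dist_eq_norm, abs_sub_le_iff]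
  constructor
  · exact (hg.sub_le_norm_mul y).trans (by gcongr)
  · exact (hg'.sub_le_norm_mul x).trans (by rw [norm_sub_rev]; gcongr)

end Subgradient

theorem regularized_minimizer_drift_general {n : ℕ} (X : Set (Euc n))
    (hXcv : Convex ℝ X)
    (f h : Euc n → ℝ) (hf : ConvexOn ℝ Set.univ f)
    (μ Ch : ℝ) (hμ : 0 < μ) (hh : StrongConvexOn Set.univ μ h)
    (hCh : ∀ x ∈ X, ∀ g, IsSubgradAt h x g → ‖g‖ ≤ Ch)
    (xs : ℝ → Euc n)
    (hxs : ∀ l, 0 < l → xs l ∈ X ∧ ∀ y ∈ X, f (xs l) + l * h (xs l) ≤ f y + l * h y)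
    (l1 l2 : ℝ) (hl1 : 0 < l1) (hl2 : 0 < l2) :
    ‖xs l2 - xs l1‖ ≤ Ch / μ * |1 - l1 / l2| := by
  obtain ⟨hx₁, hmin₁⟩ := hxs l1 hl1
  obtain ⟨hx₂, hmin₂⟩ := hxs l2 hl2
  have hsubgrad : ∀ x ∈ X, ∃ g, IsSubgradAt h x g ∧ ‖g‖ ≤ Ch := fun x hx ↦
    (exists_isSubgradAt (hh.convexOn fun _ ↦ by positivity) x).imp fun g hg ↦ ⟨hg, hCh x hx g hg⟩
  obtain ⟨g, -, hg⟩ := hsubgrad _ hx₁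
  lift Ch to ℝ≥0 using (norm_nonneg g).trans hg
  have hdrift := mul_norm_sub_le_of_isMinOn (hf.subset (subset_univ X) hXcv)
    (hh.subset (subset_univ X) hXcv) (lipschitzOnWith_of_forall_isSubgradAt hsubgrad) hl2.le
    hx₁ hx₂ (isMinOn_iff.2 hmin₁) (isMinOn_iff.2 hmin₂)
  calc ‖xs l2 - xs l1‖ = l2 * μ * ‖xs l2 - xs l1‖ / (l2 * μ) := by field_simp
    _ ≤ Ch * |l1 - l2| / (l2 * μ) := by gcongr
    _ = Ch / μ * |1 - l1 / l2| := by
      rw [one_sub_div hl2.ne', abs_div, abs_of_pos hl2, abs_sub_comm]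
      field_simp

/-- bound on the drift of regularized minimizers. -/
theorem regularized_minimizer_drift {n : ℕ} (X : Set (Euc n))
    (hXne : X.Nonempty) (hXcp : IsCompact X) (hXcv : Convex ℝ X)
    (f h : Euc n → ℝ) (hf : ConvexOn ℝ Set.univ f)
    (μ Ch : ℝ) (hμ : 0 < μ) (hh : StrongConvexOn Set.univ μ h)
    (hCh : ∀ x ∈ X, ∀ g, IsSubgradAt h x g → ‖g‖ ≤ Ch)
    (xs : ℝ → Euc n)
    (hxs : ∀ l, 0 < l → xs l ∈ X ∧ ∀ y ∈ X, f (xs l) + l * h (xs l) ≤ f y + l * h y)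
    (l1 l2 : ℝ) (hl1 : 0 < l1) (hl2 : 0 < l2) :
    ‖xs l2 - xs l1‖ ≤ Ch / μ * |1 - l1 / l2| :=
  regularized_minimizer_drift_general X hXcv f h hf μ Ch hμ hh hCh xs hxs l1 l2 hl1 hl2
end
end

section
/- Let $X \subseteq \mathbb{R}^n$ be nonempty, compact and convex, $f$ convex with optimal solution set $X^* = \arg\min_{x \in X} f(x)$ nonempty, and $h$ strongly convex with parameter $\mu_h > 0$ with $x_h^*$ the unique minimizer of $h$ over $X^*$. Let $\{\lambda_k\}$ be a positive sequence with $\lambda_k \to 0$, and let $x_{\lambda_k}^*$ be the unique minimizer of $f + \lambda_k h$ over $X$. Then $x_{\lambda_k}^* \to x_h^*$. -/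
open Filter Finset Real Set
open scoped RealInnerProductSpace Topology BigOperators

noncomputable section

/-!
Compare the regularized minimizer `x_λ` with the bilevel solution `x_h`: optimality of `x_λ`
against `x_h`, together with `f x_h ≤ f x_λ`, gives `h x_λ ≤ h x_h` and
`f x_λ + λ h x_λ ≤ f x_h + λ h x_h`. Both inequalities survive the passage to a cluster point
`x̄` of `x_λ` as `λ → 0`, so `x̄` minimizes `f` on `X` and `h x̄ ≤ h x_h`. The optimal set of a
convex problem is convex and `h` is strictly convex, so `x̄ = x_h`; compactness of `X` then forces
convergence.
-/

theorem MapClusterPt.prodMk_of_tendsto {α X Y : Type*} [TopologicalSpace X] [TopologicalSpace Y]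
    {l : Filter α} {u : α → X} {v : α → Y} {x : X} {y : Y}
    (hu : MapClusterPt x l u) (hv : Tendsto v l (𝓝 y)) :
    MapClusterPt (x, y) l fun a => (u a, v a) := by
  rw [mapClusterPt_iff_frequently] at hu
  rw [((𝓝 x).basis_sets.prod_nhds (𝓝 y).basis_sets).mapClusterPt_iff_frequently]
  rintro ⟨s, t⟩ ⟨hs, ht⟩
  exact (hu s hs).and_eventually (hv ht)

theorem convex_setOf_isMinOn {𝕜 E β : Type*} [Semiring 𝕜] [PartialOrder 𝕜] [AddCommMonoid E]
    [AddCommMonoid β] [PartialOrder β] [IsOrderedAddMonoid β] [SMul 𝕜 E] [Module 𝕜 β]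
    [PosSMulMono 𝕜 β] {f : E → β} {s : Set E} (hf : ConvexOn 𝕜 s f) :
    Convex 𝕜 {x ∈ s | IsMinOn f s x} := by
  intro x ⟨hxs, hx⟩ y ⟨hys, hy⟩ a b ha hb hab
  refine ⟨hf.1 hxs hys ha hb hab, fun z hz => ?_⟩
  calc f (a • x + b • y) ≤ a • f x + b • f y := hf.2 hxs hys ha hb hab
    _ ≤ a • f z + b • f z := by gcongr; exacts [hx hz, hy hz]
    _ = f z := by rw [← add_smul, hab, one_smul]

section Regularization

variable {ι E : Type*} {f h : E → ℝ} {X : Set E}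

theorem le_of_isMinOn_add_mul {t : ℝ} {x xh : E} (ht : 0 < t)
    (hx : IsMinOn (fun y => f y + t * h y) X x) (hxX : x ∈ X)
    (hxh : IsMinOn f X xh) (hxhX : xh ∈ X) : h x ≤ h xh := by
  have hreg : f x + t * h x ≤ f xh + t * h xh := hx hxhX
  have hopt : f xh ≤ f x := hxh hxX
  exact le_of_mul_le_mul_left (by linarith) ht

variable [TopologicalSpace E] {l : Filter ι} {lam : ι → ℝ} {xs : ι → E} {xh xb : E}

theorem isMinOn_of_mapClusterPt_regularized (hfc : Continuous f) (hhc : Continuous h)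
    (hX : IsClosed X) (hlampos : ∀ i, 0 < lam i) (hlam : Tendsto lam l (𝓝 0))
    (hxsX : ∀ i, xs i ∈ X) (hxs : ∀ i, IsMinOn (fun y => f y + lam i * h y) X (xs i))
    (hxh : IsMinOn f X xh) (hxhX : xh ∈ X) (hxb : MapClusterPt xb l xs) :
    xb ∈ X ∧ IsMinOn f X xb ∧ h xb ≤ h xh := by
  have hxbX : xb ∈ X := hX.mem_of_mapClusterPt hxb (.of_forall hxsX)
  have hxbh : h xb ≤ h xh := (isClosed_le hhc continuous_const).mem_of_mapClusterPt hxb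
    (.of_forall fun i => le_of_isMinOn_add_mul (hlampos i) (hxs i) (hxsX i) hxh hxhX)
  have hreg : IsClosed {p : E × ℝ | f p.1 + p.2 * h p.1 ≤ f xh + p.2 * h xh} :=
    isClosed_le (by fun_prop) (by fun_prop)
  have hxbf : f xb + 0 * h xb ≤ f xh + 0 * h xh :=
    hreg.mem_of_mapClusterPt (hxb.prodMk_of_tendsto hlam) (.of_forall fun i => hxs i hxhX)
  refine ⟨hxbX, fun y hy => ?_, hxbh⟩
  simp only [zero_mul, add_zero] at hxbf
  exact hxbf.trans (hxh hy)

end Regularization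

theorem regularized_minimizers_converge_general {n : ℕ} (X : Set (Euc n))
    (hXcp : IsCompact X) (hXcv : Convex ℝ X)
    (f h : Euc n → ℝ) (hf : ConvexOn ℝ Set.univ f)
    (μ : ℝ) (hμ : 0 < μ) (hh : StrongConvexOn Set.univ μ h)
    (xh : Euc n) (hxh : xh ∈ {x ∈ X | ∀ y ∈ X, f x ≤ f y} ∧
      ∀ z ∈ {x ∈ X | ∀ y ∈ X, f x ≤ f y}, h xh ≤ h z)
    (lam : ℕ → ℝ) (hlampos : ∀ k, 0 < lam k) (hlam0 : Filter.Tendsto lam atTop (nhds 0))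
    (xs : ℕ → Euc n)
    (hxs : ∀ k, xs k ∈ X ∧ ∀ y ∈ X, f (xs k) + lam k * h (xs k) ≤ f y + lam k * h y) :
    Filter.Tendsto xs atTop (nhds xh) := by
  obtain ⟨hxhS, hxhh⟩ := hxh
  have hfc : Continuous f := continuousOn_univ.mp (hf.continuousOn isOpen_univ)
  have hhstrict := hh.strictConvexOn hμ
  have hhc : Continuous h :=
    continuousOn_univ.mp (hhstrict.convexOn.continuousOn isOpen_univ)
  have hS : Convex ℝ {x ∈ X | IsMinOn f X x} :=
    convex_setOf_isMinOn (hf.subset (subset_univ X) hXcv)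
  have hhS := hhstrict.subset (subset_univ _) hS
  refine hXcp.tendsto_nhds_of_unique_mapClusterPt (.of_forall fun k => (hxs k).1)
    fun xb _ hxb => ?_
  obtain ⟨hxbX, hxbf, hxbh⟩ := isMinOn_of_mapClusterPt_regularized hfc hhc hXcp.isClosed
    hlampos hlam0 (fun k => (hxs k).1) (fun k => (hxs k).2) hxhS.2 hxhS.1 hxb
  exact hhS.eq_of_isMinOn (fun z hz => hxbh.trans (hxhh z hz)) hxhh ⟨hxbX, hxbf⟩ hxhS

/-- convergence of regularized minimizers to the bilevel solution. -/
theorem regularized_minimizers_converge {n : ℕ} (X : Set (Euc n))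
    (hXne : X.Nonempty) (hXcp : IsCompact X) (hXcv : Convex ℝ X)
    (f h : Euc n → ℝ) (hf : ConvexOn ℝ Set.univ f)
    (μ : ℝ) (hμ : 0 < μ) (hh : StrongConvexOn Set.univ μ h)
    (hXstarne : {x ∈ X | ∀ y ∈ X, f x ≤ f y}.Nonempty)
    (xh : Euc n) (hxh : xh ∈ {x ∈ X | ∀ y ∈ X, f x ≤ f y} ∧
      ∀ z ∈ {x ∈ X | ∀ y ∈ X, f x ≤ f y}, h xh ≤ h z)
    (lam : ℕ → ℝ) (hlampos : ∀ k, 0 < lam k) (hlam0 : Filter.Tendsto lam atTop (nhds 0))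
    (xs : ℕ → Euc n)
    (hxs : ∀ k, xs k ∈ X ∧ ∀ y ∈ X, f (xs k) + lam k * h (xs k) ≤ f y + lam k * h y) :
    Filter.Tendsto xs atTop (nhds xh) :=
  regularized_minimizers_converge_general X hXcp hXcv f h hf μ hμ hh xh hxh lam hlampos hlam0 xs hxs
end
end

section
/- Under Assumption 1 (X compact convex, $f = \sum_{i=1}^m f_i$ with each $f_i$ convex with subgradients bounded by $C_f$ on $X$, $h$ $\mu_h$-strongly convex with subgradients bounded by $C_h$ on $X$) and with $0 < \gamma_k \lambda_k \mu_h \leq 2m$, the iterates of the iteratively regularized incremental projected subgradient algorithm satisfy: $\|x_{k+1} - x_{\lambda_k}^*\|^2 \leq (1 - \frac{\gamma_k \lambda_k \mu_h}{2m})\|x_k - x_{\lambda_{k-1}}^*\|^2 + \frac{3m C_h^2}{\gamma_k \lambda_k \mu_h^3}|1 - \frac{\lambda_{k-1}}{\lambda_k}|^2 + 6m^2 \gamma_k^2 (C_f^2 + \lambda_k^2 C_h^2)$, where $x_{\lambda}^*$ is the unique minimizer of $f + \lambda h$ over $X$. -/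
/-!
Write `F = f + λ h = ∑ᵢ (fᵢ + (λ / m) h)` and let `z` be its minimizer over `X`. Because the
projection onto `X` is nonexpansive towards points of `X`, the `i`-th step of a cycle gives
`‖x_{i+1} - z‖² ≤ ‖x_i - z‖² - 2γ⟪dᵢ, x_i - z⟫ + γ²G²`, where `G = C_f + (λ / m) C_h` bounds
the step directions. Linearizing the `i`-th component at the start `x_0` of the cycle costs
`G ‖x_i - x_0‖ ≤ i γ G`, so over a whole cycle
`‖x_m - z‖² ≤ ‖x_0 - z‖² - 2γ (F x_0 - F z) + (m γ G)²`, and the `λμ`-strong convexity of `F`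
turns `F x_0 - F z` into a contraction. Finally the regularization path moves by
`‖x*_λ - x*_λ'‖ ≤ (C_h / μ) |1 - λ' / λ|`, which the inequality
`(1 - 2a)(v + K)² ≤ (1 - a) v² + 3K² / (2a)` absorbs into half of the contraction.
-/

open Filter Finset Real Set
open scoped RealInnerProductSpace Topology BigOperators

noncomputable section

theorem ConvexOn.sum {𝕜 E β ι : Type*} [Semiring 𝕜] [PartialOrder 𝕜] [AddCommMonoid E]
    [AddCommMonoid β] [PartialOrder β] [IsOrderedAddMonoid β] [SMul 𝕜 E] [Module 𝕜 β]
    {s : Set E} (hs : Convex 𝕜 s) (t : Finset ι) {f : ι → E → β}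
    (hf : ∀ i ∈ t, ConvexOn 𝕜 s (f i)) : ConvexOn 𝕜 s fun x ↦ ∑ i ∈ t, f i x := by
  rw [← Finset.sum_fn]
  exact Finset.sum_induction _ (ConvexOn 𝕜 s) (fun _ _ ↦ ConvexOn.add) (convexOn_const 0 hs) hf

section StrongConvexity

variable {E : Type*} [NormedAddCommGroup E] [NormedSpace ℝ E] {s : Set E} {f : E → ℝ} {κ : ℝ}

theorem StrongConvexOn.add_mul_sq_le_of_isMinOn (hf : StrongConvexOn s κ f) {z y : E}
    (hz : z ∈ s) (hmin : IsMinOn f s z) (hy : y ∈ s) : f z + κ / 2 * ‖y - z‖ ^ 2 ≤ f y := by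
  have key : ∀ t ∈ Ioo (0 : ℝ) 1, f z + (1 - t) * (κ / 2 * ‖y - z‖ ^ 2) ≤ f y := by
    rintro t ⟨ht0, ht1⟩
    have hw := hf.1 hz hy (sub_nonneg.2 ht1.le) ht0.le (sub_add_cancel 1 t)
    have hconv := hf.2 hz hy (sub_nonneg.2 ht1.le) ht0.le (sub_add_cancel 1 t)
    have hle := isMinOn_iff.1 hmin _ hw
    rw [norm_sub_rev] at hconv
    simp only [smul_eq_mul] at hconv
    have : t * (f z + (1 - t) * (κ / 2 * ‖y - z‖ ^ 2)) ≤ t * f y := by nlinarith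
    exact le_of_mul_le_mul_left this ht0
  have hlim : Tendsto (fun t : ℝ ↦ f z + (1 - t) * (κ / 2 * ‖y - z‖ ^ 2)) (𝓝[>] 0)
      (𝓝 (f z + κ / 2 * ‖y - z‖ ^ 2)) :=
    (Continuous.tendsto' (by fun_prop) 0 _ (by ring)).mono_left nhdsWithin_le_nhds
  refine le_of_tendsto hlim ?_
  filter_upwards [Ioo_mem_nhdsGT one_pos] with t ht using key t ht

theorem StrongConvexOn.subset_s9 {t : Set E} (hf : StrongConvexOn t κ f) (hst : s ⊆ t)
    (hs : Convex ℝ s) : StrongConvexOn s κ f :=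
  ⟨hs, fun _ hx _ hy ↦ hf.2 (hst hx) (hst hy)⟩

end StrongConvexity

theorem ConvexOn.add_const_mul_strongConvexOn {E : Type*} [NormedAddCommGroup E]
    [InnerProductSpace ℝ E] {s : Set E} {f h : E → ℝ} {μ l : ℝ} (hf : ConvexOn ℝ s f)
    (hh : StrongConvexOn s μ h) (hl : 0 ≤ l) : StrongConvexOn s (l * μ) fun x ↦ f x + l * h x := by
  rw [strongConvexOn_iff_convex] at hh ⊢
  refine (hf.add (hh.smul hl)).congr fun x _ ↦ ?_
  simp only [Pi.add_apply, smul_eq_mul]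
  ring

namespace IsSubgradAt

variable {n : ℕ} {φ ψ : Euc n → ℝ} {x g g' : Euc n}

theorem add (hφ : IsSubgradAt φ x g) (hψ : IsSubgradAt ψ x g') :
    IsSubgradAt (φ + ψ) x (g + g') := fun y ↦ by
  simp only [Pi.add_apply, inner_add_left]
  linarith [hφ y, hψ y]

theorem const_smul (hφ : IsSubgradAt φ x g) {c : ℝ} (hc : 0 ≤ c) :
    IsSubgradAt (c • φ) x (c • g) := fun y ↦ by
  simp only [Pi.smul_apply, smul_eq_mul, real_inner_smul_left, ← mul_add]
  exact mul_le_mul_of_nonneg_left (hφ y) hc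

theorem sub_le_inner_add_mul_norm (hg : IsSubgradAt φ x g) {x₀ g₀ : Euc n}
    (hg₀ : IsSubgradAt φ x₀ g₀) {C : ℝ} (hC : ‖g₀‖ ≤ C) (z : Euc n) :
    φ x₀ - φ z ≤ ⟪g, x - z⟫ + C * ‖x - x₀‖ := by
  have hz := hg z
  rw [← neg_sub x z, inner_neg_right] at hz
  have hinner := neg_le_of_abs_le (abs_real_inner_le_norm g₀ (x - x₀))
  have hC' := mul_le_mul_of_nonneg_right hC (norm_nonneg (x - x₀))
  linarith [hg₀ x]

theorem add_inner_add_mul_sq_le {μ : ℝ} (hφ : StrongConvexOn univ μ φ) (hg : IsSubgradAt φ x g)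
    (y : Euc n) : φ x + ⟪g, y - x⟫ + μ / 2 * ‖y - x‖ ^ 2 ≤ φ y := by
  have hstrong : StrongConvexOn univ μ fun y ↦ φ y - ⟪g, y⟫ := by
    rw [strongConvexOn_iff_convex] at hφ ⊢
    refine (hφ.sub ((innerₛₗ ℝ g).concaveOn convex_univ)).congr fun y _ ↦ ?_
    simp only [Pi.sub_apply, innerₛₗ_apply_apply]
    ring
  have hmin : IsMinOn (fun y ↦ φ y - ⟪g, y⟫) univ x := isMinOn_iff.2 fun y _ ↦ by
    linarith [hg y, inner_sub_right (𝕜 := ℝ) g y x]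
  have := hstrong.add_mul_sq_le_of_isMinOn (mem_univ x) hmin (mem_univ y)
  linarith [inner_sub_right (𝕜 := ℝ) g y x]

theorem abs_sub_le {μ C : ℝ} (hφ : StrongConvexOn univ μ φ) {y gy : Euc n}
    (hgx : IsSubgradAt φ x g) (hgy : IsSubgradAt φ y gy) (hgC : ‖g‖ ≤ C) (hgyC : ‖gy‖ ≤ C) :
    |φ y - φ x| ≤ C * ‖y - x‖ - μ / 2 * ‖y - x‖ ^ 2 := by
  have hx := hgx.add_inner_add_mul_sq_le hφ y
  have hy := hgy.add_inner_add_mul_sq_le hφ x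
  rw [norm_sub_rev x y] at hy
  have hix := neg_le_of_abs_le (abs_real_inner_le_norm g (y - x))
  have hiy := neg_le_of_abs_le (abs_real_inner_le_norm gy (x - y))
  rw [norm_sub_rev x y] at hiy
  have hCx := mul_le_mul_of_nonneg_right hgC (norm_nonneg (y - x))
  have hCy := mul_le_mul_of_nonneg_right hgyC (norm_nonneg (y - x))
  rw [abs_sub_le_iff]
  constructor <;> linarith

end IsSubgradAt

namespace IsProjOn

variable {n : ℕ} {X : Set (Euc n)} {p y z : Euc n}

theorem inner_sub_nonpos (hX : Convex ℝ X) (hp : IsProjOn X p y) (hz : z ∈ X) :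
    ⟪p - y, z - y⟫ ≤ 0 := by
  have : Nonempty X := ⟨⟨y, hp.1⟩⟩
  refine (norm_eq_iInf_iff_real_inner_le_zero hX hp.1).1 (le_antisymm ?_ ?_) z hz
  · exact le_ciInf fun w ↦ hp.2 w w.2
  · have hbdd : BddBelow (range fun w : X ↦ ‖p - w‖) := ⟨0, by rintro _ ⟨w, rfl⟩; positivity⟩
    exact ciInf_le hbdd ⟨y, hp.1⟩

theorem norm_sub_le (hX : Convex ℝ X) (hp : IsProjOn X p y) (hz : z ∈ X) :
    ‖y - z‖ ≤ ‖p - z‖ := by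
  have hexpand : ‖p - z‖ ^ 2 = ‖p - y‖ ^ 2 - 2 * ⟪p - y, z - y⟫ + ‖z - y‖ ^ 2 := by
    rw [← norm_sub_sq_real, sub_sub_sub_cancel_right]
  refine (pow_le_pow_iff_left₀ (norm_nonneg _) (norm_nonneg _) two_ne_zero).1 ?_
  rw [norm_sub_rev y z]
  nlinarith [hp.inner_sub_nonpos hX hz, sq_nonneg ‖p - y‖]

theorem norm_sub_sq_le {x g : Euc n} {γ : ℝ} (hX : Convex ℝ X) (hp : IsProjOn X (x - γ • g) y)
    (hz : z ∈ X) : ‖y - z‖ ^ 2 ≤ ‖x - z‖ ^ 2 - 2 * γ * ⟪g, x - z⟫ + γ ^ 2 * ‖g‖ ^ 2 := calc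
  ‖y - z‖ ^ 2 ≤ ‖x - γ • g - z‖ ^ 2 := pow_le_pow_left₀ (norm_nonneg _) (hp.norm_sub_le hX hz) 2
  _ = ‖x - z‖ ^ 2 - 2 * γ * ⟪g, x - z⟫ + γ ^ 2 * ‖g‖ ^ 2 := by
    rw [sub_right_comm, norm_sub_sq_real, real_inner_smul_right, norm_smul, mul_pow,
      Real.norm_eq_abs, sq_abs, real_inner_comm]
    ring

end IsProjOn

def IncrementalProjSteps {n m : ℕ} (X : Set (Euc n)) (γ : ℝ) (d : Fin m → Euc n → Euc n)
    (x : ℕ → Euc n) : Prop :=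
  ∀ i (hi : i < m), IsProjOn X (x i - γ • d ⟨i, hi⟩ (x i)) (x (i + 1))

namespace IncrementalProjSteps

variable {n m : ℕ} {X : Set (Euc n)} {γ G : ℝ} {d : Fin m → Euc n → Euc n} {x : ℕ → Euc n}

theorem mem (hx : IncrementalProjSteps X γ d x) (hx₀ : x 0 ∈ X) : ∀ j ≤ m, x j ∈ X
  | 0, _ => hx₀
  | j + 1, hj => (hx j hj).1

theorem norm_sub_le (hx : IncrementalProjSteps X γ d x) (hX : Convex ℝ X) (hγ : 0 ≤ γ)
    (hd : ∀ i, ∀ y ∈ X, ‖d i y‖ ≤ G) (hx₀ : x 0 ∈ X) : ∀ j ≤ m, ‖x j - x 0‖ ≤ j * (γ * G)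
  | 0, _ => by simp
  | j + 1, hj => by
    have hxj := hx.mem hx₀ j (Nat.le_of_succ_le hj)
    have hmove : ‖x (j + 1) - x j‖ ≤ γ * G := calc
      _ ≤ ‖x j - γ • d ⟨j, hj⟩ (x j) - x j‖ := (hx j hj).norm_sub_le hX hxj
      _ = γ * ‖d ⟨j, hj⟩ (x j)‖ := by
        rw [sub_sub_cancel_left, norm_neg, norm_smul, Real.norm_of_nonneg hγ]
      _ ≤ γ * G := mul_le_mul_of_nonneg_left (hd _ _ hxj) hγ
    have hprev := hx.norm_sub_le hX hγ hd hx₀ j (Nat.le_of_succ_le hj)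
    calc ‖x (j + 1) - x 0‖ ≤ ‖x (j + 1) - x j‖ + ‖x j - x 0‖ :=
          norm_sub_le_norm_sub_add_norm_sub _ _ _
      _ ≤ (j + 1 : ℕ) * (γ * G) := by push_cast; linarith

theorem norm_sub_sq_le (hx : IncrementalProjSteps X γ d x) (hX : Convex ℝ X) (hγ : 0 ≤ γ)
    {ψ : Fin m → Euc n → ℝ} (hd : ∀ i, ∀ y ∈ X, IsSubgradAt (ψ i) y (d i y) ∧ ‖d i y‖ ≤ G)
    (hx₀ : x 0 ∈ X) {z : Euc n} (hz : z ∈ X) :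
    ‖x m - z‖ ^ 2 ≤ ‖x 0 - z‖ ^ 2 - 2 * γ * ∑ i, (ψ i (x 0) - ψ i z) + (m * γ * G) ^ 2 := by
  induction m with
  | zero => simp
  | succ m ih =>
    have hprev := ih (ψ := fun i ↦ ψ i.castSucc) (d := fun i ↦ d i.castSucc)
      (fun i hi ↦ hx i (hi.trans m.lt_succ_self)) fun i ↦ hd i.castSucc
    have hxm := hx.mem hx₀ m m.le_succ
    have hdrift := hx.norm_sub_le hX hγ (fun i y hy ↦ (hd i y hy).2) hx₀ m m.le_succ
    obtain ⟨hsub, hnorm⟩ := hd (Fin.last m) (x m) hxm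
    have hG : 0 ≤ G := (norm_nonneg _).trans hnorm
    have hlast : ‖x (m + 1) - z‖ ^ 2 ≤ ‖x m - z‖ ^ 2 - 2 * γ * ⟪d (Fin.last m) (x m), x m - z⟫
        + γ ^ 2 * ‖d (Fin.last m) (x m)‖ ^ 2 := (hx m m.lt_succ_self).norm_sub_sq_le hX hz
    -- linearizing the last component at the start `x 0` of the cycle
    have hinner := hsub.sub_le_inner_add_mul_norm (hd _ _ hx₀).1 (hd _ _ hx₀).2 z
    have hsq := mul_le_mul_of_nonneg_left (pow_le_pow_left₀ (norm_nonneg _) hnorm 2) (sq_nonneg γ)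
    have hcross := mul_le_mul_of_nonneg_left hinner (by positivity : 0 ≤ 2 * γ)
    have hdrift' := mul_le_mul_of_nonneg_left hdrift (by positivity : 0 ≤ 2 * γ * G)
    rw [Fin.sum_univ_castSucc]
    push_cast
    linarith

theorem norm_sub_sq_le_of_isMinOn {fi : Fin m → Euc n → ℝ} {h : Euc n → ℝ}
    {gf : Fin m → Euc n → Euc n} {gh : Euc n → Euc n} {Cf Ch μ l : ℝ}
    (hx : IncrementalProjSteps X γ (fun i y ↦ gf i y + (l / m) • gh y) x) (hX : Convex ℝ X)
    (hF : StrongConvexOn X (l * μ) fun y ↦ ∑ i, fi i y + l * h y)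
    (hgf : ∀ i, ∀ y ∈ X, IsSubgradAt (fi i) y (gf i y) ∧ ‖gf i y‖ ≤ Cf)
    (hgh : ∀ y ∈ X, IsSubgradAt h y (gh y) ∧ ‖gh y‖ ≤ Ch) (hm : 0 < m) (hγ : 0 ≤ γ) (hl : 0 ≤ l)
    (hx₀ : x 0 ∈ X) {z : Euc n} (hz : z ∈ X)
    (hzmin : IsMinOn (fun y ↦ ∑ i, fi i y + l * h y) X z) :
    ‖x m - z‖ ^ 2 ≤ (1 - γ * l * μ) * ‖x 0 - z‖ ^ 2 + γ ^ 2 * (m * Cf + l * Ch) ^ 2 := by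
  have hc : 0 ≤ l / m := by positivity
  have hd : ∀ i, ∀ y ∈ X, IsSubgradAt (fi i + (l / m) • h) y (gf i y + (l / m) • gh y) ∧
      ‖gf i y + (l / m) • gh y‖ ≤ Cf + l / m * Ch := fun i y hy ↦
    ⟨(hgf i y hy).1.add ((hgh y hy).1.const_smul hc),
      (norm_add_le _ _).trans (add_le_add (hgf i y hy).2 (by
        rw [norm_smul, Real.norm_of_nonneg hc]
        exact mul_le_mul_of_nonneg_left (hgh y hy).2 hc))⟩
  have hcycle := hx.norm_sub_sq_le hX hγ hd hx₀ hz
  have hm' : (m : ℝ) ≠ 0 := by positivity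
  have hsplit : ∑ i, ((fi i + (l / m) • h) (x 0) - (fi i + (l / m) • h) z)
      = (∑ i, fi i (x 0) + l * h (x 0)) - (∑ i, fi i z + l * h z) := by
    simp only [Pi.add_apply, Pi.smul_apply, smul_eq_mul, Finset.sum_sub_distrib,
      Finset.sum_add_distrib, Finset.sum_const, Finset.card_univ, Fintype.card_fin, nsmul_eq_mul]
    field_simp
  have hgrowth := mul_le_mul_of_nonneg_left (hF.add_mul_sq_le_of_isMinOn hz hzmin hx₀)
    (by positivity : 0 ≤ 2 * γ)
  have hG : (m * γ * (Cf + l / m * Ch)) ^ 2 = γ ^ 2 * (m * Cf + l * Ch) ^ 2 := by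
    field_simp
  rw [hsplit, hG] at hcycle
  linarith

end IncrementalProjSteps

theorem norm_sub_le_of_isMinOn_add_mul {n : ℕ} {X : Set (Euc n)} {f h : Euc n → ℝ}
    {gh : Euc n → Euc n} {μ l l' C : ℝ} (hμ : 0 < μ) (hl : 0 < l) (hh : StrongConvexOn univ μ h)
    (hgh : ∀ y ∈ X, IsSubgradAt h y (gh y) ∧ ‖gh y‖ ≤ C)
    (hF : StrongConvexOn X (l * μ) fun y ↦ f y + l * h y)
    (hF' : StrongConvexOn X (l' * μ) fun y ↦ f y + l' * h y) {z z' : Euc n} (hz : z ∈ X)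
    (hz' : z' ∈ X) (hzmin : IsMinOn (fun y ↦ f y + l * h y) X z)
    (hz'min : IsMinOn (fun y ↦ f y + l' * h y) X z') : ‖z - z'‖ ≤ C / μ * |1 - l' / l| := by
  obtain ⟨hgz, hgzC⟩ := hgh z hz
  obtain ⟨hgz', hgz'C⟩ := hgh z' hz'
  have hgrowth := hF.add_mul_sq_le_of_isMinOn hz hzmin hz'
  have hgrowth' := hF'.add_mul_sq_le_of_isMinOn hz' hz'min hz
  have hvar := hgz.abs_sub_le hh hgz' hgzC hgz'C
  rw [norm_sub_rev z' z] at hgrowth hvar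
  set D := ‖z - z'‖
  have hmix : (l - l') * (h z' - h z) ≤ |l - l'| * (C * D - μ / 2 * D ^ 2) := calc
    _ ≤ |(l - l') * (h z' - h z)| := le_abs_self _
    _ ≤ _ := by rw [abs_mul]; exact mul_le_mul_of_nonneg_left hvar (abs_nonneg _)
  have hmax := mul_le_mul_of_nonneg_right (by linarith [le_abs_self (l - l')] :
    2 * l ≤ l + l' + |l - l'|) (by positivity : 0 ≤ μ / 2 * D ^ 2)
  -- the two growth inequalities add up to `(l + l') μ / 2 D² ≤ (l - l') (h z' - h z)`
  have hkey : l * μ * D * D ≤ C * |l - l'| * D := by linarith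
  have hC : 0 ≤ C := (norm_nonneg _).trans hgzC
  have hD : l * μ * D ≤ C * |l - l'| := by
    rcases (show 0 ≤ D from norm_nonneg _).eq_or_lt with hD0 | hDpos
    · rw [← hD0, mul_zero]; positivity
    · exact le_of_mul_le_mul_right hkey hDpos
  rw [one_sub_div hl.ne', abs_div, abs_of_pos hl, div_mul_div_comm, le_div_iff₀ (by positivity)]
  linarith

theorem mul_sq_le_of_le_add {a u v K : ℝ} (ha : 0 < a) (ha1 : a ≤ 1) (hu : 0 ≤ u)
    (huv : u ≤ v + K) : (1 - 2 * a) * u ^ 2 ≤ (1 - a) * v ^ 2 + 3 / (2 * a) * K ^ 2 := by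
  have hK : 0 ≤ 3 / (2 * a) * K ^ 2 := by positivity
  rcases le_or_gt (1 / 2) a with ha2 | ha2
  · nlinarith [mul_nonneg (sub_nonneg.2 ha1) (sq_nonneg v)]
  · have hsq : u ^ 2 ≤ (v + K) ^ 2 := pow_le_pow_left₀ hu huv 2
    -- `2a(1-a)v² + 3K² - 2a(1-2a)(v+K)² = 2(av - (1-2a)K)² + (1 + 6a - 4a²)K²`
    have hpoly : 2 * a * ((1 - 2 * a) * (v + K) ^ 2) ≤ 2 * a * ((1 - a) * v ^ 2) + 3 * K ^ 2 := by
      nlinarith [sq_nonneg (a * v - (1 - 2 * a) * K), mul_nonneg ha.le (sq_nonneg K)]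
    have : (1 - 2 * a) * (v + K) ^ 2 ≤ (1 - a) * v ^ 2 + 3 / (2 * a) * K ^ 2 := by
      have h3 : 2 * a * (3 / (2 * a) * K ^ 2) = 3 * K ^ 2 := by field_simp
      rw [← mul_le_mul_iff_of_pos_left (by positivity : 0 < 2 * a), mul_add, h3]
      exact hpoly
    nlinarith

theorem recursive_error_bound_general {n : ℕ} (X : Set (Euc n))
    (hXcv : Convex ℝ X)
    (m : ℕ) (hm : 1 ≤ m)
    (fi : Fin m → Euc n → ℝ) (hfi : ∀ i, ConvexOn ℝ Set.univ (fi i))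
    (f : Euc n → ℝ) (hfdef : f = fun y => ∑ i, fi i y)
    (h : Euc n → ℝ) (μ : ℝ) (hμ : 0 < μ) (hh : StrongConvexOn Set.univ μ h)
    (Cf Ch : ℝ)
    (gf : Fin m → Euc n → Euc n) (gh : Euc n → Euc n)
    (hgf : ∀ i, ∀ y ∈ X, IsSubgradAt (fi i) y (gf i y) ∧ ‖gf i y‖ ≤ Cf)
    (hgh : ∀ y ∈ X, IsSubgradAt h y (gh y) ∧ ‖gh y‖ ≤ Ch)
    (xlam : ℝ → Euc n)
    (hxlam : ∀ l, 0 < l → xlam l ∈ X ∧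
      ∀ y ∈ X, f (xlam l) + l * h (xlam l) ≤ f y + l * h y)
    (γk lamk : ℝ) (hγk : 0 < γk) (hlamk : 0 < lamk)
    (hstep : γk * lamk * μ ≤ 2 * (m : ℝ))
    (xk : Euc n) (hxk : xk ∈ X)
    (xi : ℕ → Euc n) (hxi0 : xi 0 = xk)
    (hrec : ∀ i (hi : i < m),
      IsProjOn X
        (xi i - γk • (gf ⟨i, hi⟩ (xi i) + (lamk / (m : ℝ)) • gh (xi i)))
        (xi (i + 1)))
    (lamprev : ℝ) (hlamprev : 0 < lamprev) :
    ‖xi m - xlam lamk‖ ^ 2 ≤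
      (1 - γk * lamk * μ / (2 * (m : ℝ))) * ‖xk - xlam lamprev‖ ^ 2 +
        3 * (m : ℝ) * Ch ^ 2 / (γk * lamk * μ ^ 3) * |1 - lamprev / lamk| ^ 2 +
        6 * (m : ℝ) ^ 2 * γk ^ 2 * (Cf ^ 2 + lamk ^ 2 * Ch ^ 2) := by
  subst hfdef hxi0
  have hm1 : (1 : ℝ) ≤ m := by exact_mod_cast hm
  have hF : ∀ l, 0 ≤ l → StrongConvexOn X (l * μ) fun y ↦ ∑ i, fi i y + l * h y := fun l hl ↦
    ((ConvexOn.sum convex_univ _ fun i _ ↦ hfi i).add_const_mul_strongConvexOn hh hl).subset_s9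
      (subset_univ X) hXcv
  obtain ⟨hzX, hzmin⟩ := hxlam lamk hlamk
  obtain ⟨hz'X, hz'min⟩ := hxlam lamprev hlamprev
  have hcycle := IncrementalProjSteps.norm_sub_sq_le_of_isMinOn hrec hXcv (hF lamk hlamk.le) hgf
    hgh hm hγk.le hlamk.le hxk hzX (isMinOn_iff.2 hzmin)
  have hdist := norm_sub_le_of_isMinOn_add_mul hμ hlamk hh hgh (hF lamk hlamk.le)
    (hF lamprev hlamprev.le) hzX hz'X (isMinOn_iff.2 hzmin) (isMinOn_iff.2 hz'min)
  have htri : ‖xi 0 - xlam lamk‖ ≤ ‖xi 0 - xlam lamprev‖ + Ch / μ * |1 - lamprev / lamk| := by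
    linarith [norm_sub_le_norm_sub_add_norm_sub (xi 0) (xlam lamprev) (xlam lamk),
      norm_sub_rev (xlam lamprev) (xlam lamk)]
  set a := γk * lamk * μ / (2 * m) with ha
  have ha0 : 0 < a := by positivity
  have hcouple := mul_sq_le_of_le_add ha0 (div_le_one_of_le₀ hstep (by positivity))
    (norm_nonneg _) htri
  have hrate : 2 * a ≤ γk * lamk * μ := calc
    2 * a = γk * lamk * μ / m := by rw [ha]; field_simp
    _ ≤ γk * lamk * μ := div_le_self (by positivity) hm1
  have hK : 3 / (2 * a) * (Ch / μ * |1 - lamprev / lamk|) ^ 2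
      = 3 * m * Ch ^ 2 / (γk * lamk * μ ^ 3) * |1 - lamprev / lamk| ^ 2 := by
    rw [ha]; field_simp
  have hG : (m * Cf + lamk * Ch) ^ 2 ≤ 6 * m ^ 2 * (Cf ^ 2 + lamk ^ 2 * Ch ^ 2) := by
    nlinarith [sq_nonneg (m * Cf - lamk * Ch), sq_nonneg (m * Cf), sq_nonneg (lamk * Ch),
      mul_le_mul_of_nonneg_right (one_le_pow₀ hm1 : (1 : ℝ) ≤ m ^ 2) (sq_nonneg (lamk * Ch))]
  linarith [mul_le_mul_of_nonneg_right hrate (sq_nonneg ‖xi 0 - xlam lamk‖),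
    mul_le_mul_of_nonneg_left hG (sq_nonneg γk)]

/-- recursive error bound for the IR-IG step. -/
theorem recursive_error_bound {n : ℕ} (X : Set (Euc n))
    (hXne : X.Nonempty) (hXcp : IsCompact X) (hXcv : Convex ℝ X)
    (m : ℕ) (hm : 1 ≤ m)
    (fi : Fin m → Euc n → ℝ) (hfi : ∀ i, ConvexOn ℝ Set.univ (fi i))
    (f : Euc n → ℝ) (hfdef : f = fun y => ∑ i, fi i y)
    (h : Euc n → ℝ) (μ : ℝ) (hμ : 0 < μ) (hh : StrongConvexOn Set.univ μ h)
    (Cf Ch : ℝ)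
    (gf : Fin m → Euc n → Euc n) (gh : Euc n → Euc n)
    (hgf : ∀ i, ∀ y ∈ X, IsSubgradAt (fi i) y (gf i y) ∧ ‖gf i y‖ ≤ Cf)
    (hgh : ∀ y ∈ X, IsSubgradAt h y (gh y) ∧ ‖gh y‖ ≤ Ch)
    (hCf : ∀ i, ∀ y ∈ X, ∀ g, IsSubgradAt (fi i) y g → ‖g‖ ≤ Cf)
    (hChb : ∀ y ∈ X, ∀ g, IsSubgradAt h y g → ‖g‖ ≤ Ch)
    (xlam : ℝ → Euc n)
    (hxlam : ∀ l, 0 < l → xlam l ∈ X ∧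
      ∀ y ∈ X, f (xlam l) + l * h (xlam l) ≤ f y + l * h y)
    (γk lamk : ℝ) (hγk : 0 < γk) (hlamk : 0 < lamk)
    (hstep : γk * lamk * μ ≤ 2 * (m : ℝ))
    (xk : Euc n) (hxk : xk ∈ X)
    (xi : ℕ → Euc n) (hxi0 : xi 0 = xk)
    (hrec : ∀ i (hi : i < m),
      IsProjOn X
        (xi i - γk • (gf ⟨i, hi⟩ (xi i) + (lamk / (m : ℝ)) • gh (xi i)))
        (xi (i + 1)))
    (lamprev : ℝ) (hlamprev : 0 < lamprev) :
    ‖xi m - xlam lamk‖ ^ 2 ≤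
      (1 - γk * lamk * μ / (2 * (m : ℝ))) * ‖xk - xlam lamprev‖ ^ 2 +
        3 * (m : ℝ) * Ch ^ 2 / (γk * lamk * μ ^ 3) * |1 - lamprev / lamk| ^ 2 +
        6 * (m : ℝ) ^ 2 * γk ^ 2 * (Cf ^ 2 + lamk ^ 2 * Ch ^ 2) :=
  recursive_error_bound_general X hXcv m hm fi hfi f hfdef h μ hμ hh Cf Ch gf gh hgf hgh xlam hxlam
    γk lamk hγk hlamk hstep xk hxk xi hxi0 hrec lamprev hlamprev

end
end

section
/- For $0 < ar$, $b > 0$ with $ar + b < 1$ and $ar < 1$, we have $\left(\sum_{k=0}^{N-1}(k+1)^{-ar}\right)^{-1}\left(\sum_{k=0}^{N-1}(k+1)^{-(ar+b)}\right) = \mathcal{O}(N^{-b}) + \mathcal{O}(N^{-(1-ar)})$ as $N \to \infty$. -/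
open Filter Finset Real Set
open scoped RealInnerProductSpace Topology BigOperators

noncomputable section

/-! Both power sums are compared with `N ^ (1 - p)`: from below termwise, since every term is at
least `N ^ (-p)`, and from above by the integral of `x ^ (-p)` over `[1, N]`. The quotient of the
two bounds is `N ^ (-b) / (1 - (α + b))`. -/

lemma rpow_one_sub_le_sum_range_add_one_rpow_neg {α : ℝ} (hα : 0 ≤ α) {N : ℕ} (hN : N ≠ 0) :
    (N : ℝ) ^ (1 - α) ≤ ∑ k ∈ range N, ((k : ℝ) + 1) ^ (-α) := by
  have hN0 : (0 : ℝ) < N := by positivity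
  have hterm : ∀ k ∈ range N, (N : ℝ) ^ (-α) ≤ ((k : ℝ) + 1) ^ (-α) := fun k hk =>
    rpow_le_rpow_of_nonpos (by positivity) (by exact_mod_cast mem_range.mp hk) (by linarith)
  calc (N : ℝ) ^ (1 - α) = ∑ _k ∈ range N, (N : ℝ) ^ (-α) := by
        rw [sum_const, card_range, nsmul_eq_mul, sub_eq_add_neg, rpow_add hN0, rpow_one]
    _ ≤ _ := sum_le_sum hterm

lemma sum_range_add_one_rpow_neg_le {p : ℝ} (hp0 : 0 ≤ p) (hp1 : p < 1) (N : ℕ) :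
    ∑ k ∈ range N, ((k : ℝ) + 1) ^ (-p) ≤ (N : ℝ) ^ (1 - p) / (1 - p) := by
  have h1p : 0 < 1 - p := by linarith
  rcases N with _ | M
  · simp [zero_rpow h1p.ne']
  have hanti : AntitoneOn (fun x : ℝ => x ^ (-p)) (Icc 1 (1 + M)) := fun x hx y _ hxy =>
    rpow_le_rpow_of_nonpos (one_pos.trans_le hx.1) hxy (by linarith)
  have hint := hanti.sum_le_integral
  rw [integral_rpow (Or.inl (by linarith)), one_rpow, neg_add_eq_sub] at hint
  have hX : 1 ≤ (1 + M : ℝ) ^ (1 - p) := one_le_rpow (by linarith [M.cast_nonneg (α := ℝ)]) h1p.le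
  rw [sum_range_succ']
  push_cast at hint ⊢
  simp only [add_comm _ (1 : ℝ), add_zero, one_rpow] at hint ⊢
  calc _ ≤ ((1 + M : ℝ) ^ (1 - p) - 1) / (1 - p) + 1 := by linarith
    _ ≤ (1 + M : ℝ) ^ (1 - p) / (1 - p) := by
        rw [div_add_one h1p.ne']; gcongr; linarith

lemma sum_range_rpow_neg_ratio_le {α b : ℝ} (hα : 0 ≤ α) (hαb : 0 ≤ α + b) (hαb1 : α + b < 1)
    {N : ℕ} (hN : N ≠ 0) :
    (∑ k ∈ range N, ((k : ℝ) + 1) ^ (-α))⁻¹ * ∑ k ∈ range N, ((k : ℝ) + 1) ^ (-(α + b)) ≤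
      (N : ℝ) ^ (-b) / (1 - (α + b)) := by
  have hN0 : (0 : ℝ) < N := by positivity
  have hinv : (∑ k ∈ range N, ((k : ℝ) + 1) ^ (-α))⁻¹ ≤ (N : ℝ) ^ (-(1 - α)) := by
    rw [rpow_neg hN0.le]
    exact inv_anti₀ (by positivity) (rpow_one_sub_le_sum_range_add_one_rpow_neg hα hN)
  calc _ ≤ (N : ℝ) ^ (-(1 - α)) * ((N : ℝ) ^ (1 - (α + b)) / (1 - (α + b))) :=
        mul_le_mul hinv (sum_range_add_one_rpow_neg_le hαb hαb1 N) (by positivity) (by positivity)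
    _ = (N : ℝ) ^ (-b) / (1 - (α + b)) := by
        rw [mul_div_assoc', ← rpow_add hN0]; ring_nf

theorem ratio_estimate_two_general (a r b : ℝ) (h1 : 0 < a * r) (h2 : 0 < b)
    (h3 : a * r + b < 1) :
    ∃ C > 0, ∃ N0 : ℕ, ∀ N ≥ N0,
      (∑ k ∈ Finset.range N, ((k : ℝ) + 1) ^ (-(a * r)))⁻¹ *
          (∑ k ∈ Finset.range N, ((k : ℝ) + 1) ^ (-(a * r + b))) ≤
        C * ((N : ℝ) ^ (-b) + (N : ℝ) ^ (-(1 - a * r))) := by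
  have hC : 0 < 1 - (a * r + b) := by linarith
  refine ⟨1 / (1 - (a * r + b)), by positivity, 1, fun N hN => ?_⟩
  have hN0 : N ≠ 0 := Nat.one_le_iff_ne_zero.mp hN
  calc _ ≤ (N : ℝ) ^ (-b) / (1 - (a * r + b)) :=
        sum_range_rpow_neg_ratio_le h1.le (by linarith) h3 hN0
    _ ≤ 1 / (1 - (a * r + b)) * ((N : ℝ) ^ (-b) + (N : ℝ) ^ (-(1 - a * r))) := by
        rw [one_div_mul_eq_div]
        gcongr
        exact le_add_of_nonneg_right (by positivity)

/-- a second power-sum ratio estimate. -/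
theorem ratio_estimate_two (a r b : ℝ) (h1 : 0 < a * r) (h2 : 0 < b)
    (h3 : a * r + b < 1) (h4 : a * r < 1) :
    ∃ C > 0, ∃ N0 : ℕ, ∀ N ≥ N0,
      (∑ k ∈ Finset.range N, ((k : ℝ) + 1) ^ (-(a * r)))⁻¹ *
          (∑ k ∈ Finset.range N, ((k : ℝ) + 1) ^ (-(a * r + b))) ≤
        C * ((N : ℝ) ^ (-b) + (N : ℝ) ^ (-(1 - a * r))) :=
  ratio_estimate_two_general a r b h1 h2 h3
end
end

section
/- Under Assumption 1, with $\gamma_k = \gamma_0/(k+1)^{0.5+0.5\epsilon}$ and $\lambda_k = \lambda_0/(k+1)^{0.5-\epsilon}$ for some $0 < \epsilon < 0.5$, $r < 1$, $\gamma_0\lambda_0\mu_h \leq 2m$, the averaged iterates $\bar{x}_N$ of the IR-IG algorithm satisfy $f(\bar{x}_N) - f^* = \mathcal{O}(N^{-(0.5-\epsilon)})$. -/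
/-!
One IR-IG cycle is a chain of projected steps with a common step size `γ_k`. Projection onto a
convex set is nonexpansive towards its points, so a cycle decreases `‖x_k - x*‖²` by
`2 γ_k (f x_k - f x*)` up to an error `O(γ_k²)` (the drift of the inner iterates away from `x_k`)
and an error `O(γ_k λ_k)` (the regularizer term, bounded on the compact set `X`).
Weighting these inequalities with the nondecreasing factors `γ_k ^ (r - 1)` and summing by parts
bounds `∑ γ_k ^ r (f x_k - f x*)` by
`γ_{N-1} ^ (r - 1) diam(X)² + ∑ γ_k ^ (r - 1) O(γ_k² + γ_k λ_k)`.
Jensen's inequality passes this to the weighted average, and the power sums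
`∑_{k<N} (k+1) ^ s ≍ N ^ (s + 1)` (valid for `s > -1`) turn the ratio into `O(N ^ (-(1/2 - ε)))`.
-/

open Filter Finset Real Set
open scoped RealInnerProductSpace Topology BigOperators

noncomputable section

namespace IsProjOn

variable {n : ℕ} {X : Set (Euc n)} {p y z : Euc n}

theorem norm_sub_sq_le_of_step {γ : ℝ} {d : Euc n} (hX : Convex ℝ X)
    (hp : IsProjOn X (y - γ • d) p) (hz : z ∈ X) :
    ‖p - z‖ ^ 2 ≤ ‖y - z‖ ^ 2 - 2 * γ * ⟪d, y - z⟫ + γ ^ 2 * ‖d‖ ^ 2 := by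
  have hexpand : ‖(y - γ • d) - z‖ ^ 2 = ‖y - z‖ ^ 2 - 2 * γ * ⟪d, y - z⟫ + γ ^ 2 * ‖d‖ ^ 2 := by
    rw [show (y - γ • d) - z = (y - z) - γ • d by abel, norm_sub_sq_real, real_inner_smul_right,
      norm_smul, real_inner_comm, mul_pow, Real.norm_eq_abs, sq_abs]
    ring
  rw [← hexpand]
  exact pow_le_pow_left₀ (norm_nonneg _) (hp.norm_sub_le hX hz) 2

end IsProjOn

namespace IsSubgradAt

variable {n : ℕ} {f : Euc n → ℝ} {x g : Euc n}

theorem sub_le_inner (hg : IsSubgradAt f x g) (y : Euc n) : f x - f y ≤ ⟪g, x - y⟫ := by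
  have := hg y
  rw [← neg_sub x y, inner_neg_right] at this
  linarith

theorem sub_le_norm_mul_s17 (hg : IsSubgradAt f x g) (y : Euc n) : f x - f y ≤ ‖g‖ * ‖x - y‖ :=
  (hg.sub_le_inner y).trans (real_inner_le_norm g (x - y))

end IsSubgradAt

theorem ConvexOn.finset_sum {𝕜 E ι : Type*} [Semiring 𝕜] [PartialOrder 𝕜] [AddCommMonoid E]
    [SMul 𝕜 E] {s : Set E} {β : Type*} [AddCommMonoid β] [PartialOrder β] [IsOrderedAddMonoid β]
    [Module 𝕜 β] {t : Finset ι} {f : ι → E → β} (hs : Convex 𝕜 s)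
    (hf : ∀ i ∈ t, ConvexOn 𝕜 s (f i)) :
    ConvexOn 𝕜 s (fun x => ∑ i ∈ t, f i x) := by
  classical
  induction t using Finset.induction_on with
  | empty => simpa using convexOn_const (0 : β) hs
  | insert a t ha ih =>
    simp_rw [Finset.sum_insert ha]
    exact (hf a (mem_insert_self a t)).add (ih fun i hi => hf i (mem_insert_of_mem hi))

theorem ConvexOn.map_sum_div_smul_sub_le {ι E : Type*} [AddCommGroup E] [Module ℝ E]
    {f : E → ℝ} (hf : ConvexOn ℝ univ f) {s : Finset ι} {w : ι → ℝ} (hw : ∀ i ∈ s, 0 ≤ w i)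
    (hW : 0 < ∑ i ∈ s, w i) (x : ι → E) (c : ℝ) :
    f (∑ i ∈ s, (w i / ∑ j ∈ s, w j) • x i) - c ≤
      (∑ i ∈ s, w i * (f (x i) - c)) / ∑ j ∈ s, w j := by
  have hjensen := hf.map_sum_le (t := s) (w := fun i => w i / ∑ j ∈ s, w j) (p := x)
    (fun i hi => div_nonneg (hw i hi) hW.le) (by rw [← Finset.sum_div, div_self hW.ne'])
    (fun i _ => mem_univ _)
  have hrhs : ∑ i ∈ s, (w i / ∑ j ∈ s, w j) • f (x i) - c =
      (∑ i ∈ s, w i * (f (x i) - c)) / ∑ j ∈ s, w j := by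
    simp only [smul_eq_mul, mul_sub, Finset.sum_sub_distrib, ← Finset.sum_mul, sub_div,
      Finset.sum_div, div_mul_eq_mul_div]
    field_simp
  linarith

theorem sum_range_rpow_le {s : ℝ} (hs : -1 < s) (N : ℕ) :
    ∑ k ∈ range N, ((k : ℝ) + 1) ^ s ≤ (1 + (s + 1)⁻¹) * (N : ℝ) ^ (s + 1) := by
  have hs1 : 0 < s + 1 := by linarith
  rcases le_or_gt 0 s with hs0 | hs0
  · have hterm : ∀ k ∈ range N, ((k : ℝ) + 1) ^ s ≤ (N : ℝ) ^ s := fun k hk =>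
      rpow_le_rpow (by positivity) (by exact_mod_cast mem_range.mp hk) hs0
    calc ∑ k ∈ range N, ((k : ℝ) + 1) ^ s ≤ N * (N : ℝ) ^ s := by
          simpa using Finset.sum_le_sum hterm
      _ = 1 * (N : ℝ) ^ (s + 1) := by rw [rpow_add_one' N.cast_nonneg hs1.ne', one_mul, mul_comm]
      _ ≤ (1 + (s + 1)⁻¹) * (N : ℝ) ^ (s + 1) := by gcongr; simp [hs1.le]
  · obtain _ | n := N
    · simp [zero_rpow hs1.ne']
    -- the first term is split off: `x ^ s` is not antitone on `[0, 1]`, as `0 ^ s = 0`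
    have hanti : AntitoneOn (fun x : ℝ => x ^ s) (Icc 1 (1 + n)) := fun a ha b _ hab =>
      rpow_le_rpow_of_nonpos (one_pos.trans_le ha.1) hab hs0.le
    have hint := hanti.sum_le_integral
    rw [integral_rpow (Or.inl hs), one_rpow] at hint
    have hN : (1 : ℝ) ≤ ((n : ℝ) + 1) ^ (s + 1) := one_le_rpow (by simp) hs1.le
    have hdrop : (((n : ℝ) + 1) ^ (s + 1) - 1) / (s + 1) ≤ ((n : ℝ) + 1) ^ (s + 1) / (s + 1) := by
      gcongr; linarith
    rw [sum_range_succ']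
    push_cast at hint ⊢
    simp only [add_comm (1 : ℝ), add_assoc, one_add_one_eq_two] at hint ⊢
    rw [zero_add, one_rpow, add_mul, inv_mul_eq_div]
    linarith

theorem mul_rpow_le_sum_range_rpow {s : ℝ} (hs : -1 < s) (N : ℕ) :
    min 1 (s + 1)⁻¹ * (N : ℝ) ^ (s + 1) ≤ ∑ k ∈ range N, ((k : ℝ) + 1) ^ s := by
  have hs1 : 0 < s + 1 := by linarith
  rcases le_or_gt s 0 with hs0 | hs0
  · have hterm : ∀ k ∈ range N, (N : ℝ) ^ s ≤ ((k : ℝ) + 1) ^ s := fun k hk =>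
      rpow_le_rpow_of_nonpos (by positivity) (by exact_mod_cast mem_range.mp hk) hs0
    calc min 1 (s + 1)⁻¹ * (N : ℝ) ^ (s + 1) ≤ 1 * (N : ℝ) ^ (s + 1) := by
          gcongr; exact min_le_left _ _
      _ = N * (N : ℝ) ^ s := by rw [rpow_add_one' N.cast_nonneg hs1.ne', one_mul, mul_comm]
      _ ≤ ∑ k ∈ range N, ((k : ℝ) + 1) ^ s := by simpa using Finset.sum_le_sum hterm
  · have hmono : MonotoneOn (fun x : ℝ => x ^ s) (Icc 0 (0 + N)) := fun a ha b _ hab =>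
      rpow_le_rpow ha.1 hab hs0.le
    have hint := hmono.integral_le_sum
    rw [integral_rpow (Or.inl hs), zero_rpow hs1.ne', sub_zero, zero_add] at hint
    calc min 1 (s + 1)⁻¹ * (N : ℝ) ^ (s + 1) ≤ (N : ℝ) ^ (s + 1) / (s + 1) := by
          rw [div_eq_inv_mul]; gcongr; exact min_le_right _ _
      _ ≤ ∑ k ∈ range N, ((k : ℝ) + 1) ^ s := by simpa using hint

theorem sum_mul_sub_succ_le {c d : ℕ → ℝ} {D : ℝ} (hc : ∀ k, 0 ≤ c k) (hcmono : Monotone c)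
    (hdD : ∀ k, d k ≤ D) (hd : ∀ k, 0 ≤ d k) (N : ℕ) :
    ∑ k ∈ range N, c k * (d k - d (k + 1)) ≤ c (N - 1) * D := by
  suffices h : ∑ k ∈ range N, c k * (d k - d (k + 1)) ≤ c (N - 1) * (D - d N) by
    nlinarith [hc (N - 1), hd N]
  induction N with
  | zero => simpa using mul_nonneg (hc 0) (sub_nonneg.mpr (hdD 0))
  | succ N ih =>
    have hstep : c (N - 1) * (D - d N) ≤ c N * (D - d N) :=
      mul_le_mul_of_nonneg_right (hcmono (N.sub_le 1)) (sub_nonneg.mpr (hdD N))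
    rw [sum_range_succ, Nat.add_sub_cancel]
    linarith

theorem sum_rpow_mul_le_of_descent {γ a d e : ℕ → ℝ} {r D : ℝ} (hγ : ∀ k, 0 < γ k)
    (hγanti : Antitone γ) (hr : r ≤ 1) (hdD : ∀ k, d k ≤ D) (hd : ∀ k, 0 ≤ d k)
    (hdesc : ∀ k, 2 * γ k * a k ≤ d k - d (k + 1) + e k) (N : ℕ) :
    ∑ k ∈ range N, γ k ^ r * a k ≤
      (γ (N - 1) ^ (r - 1) * D + ∑ k ∈ range N, γ k ^ (r - 1) * e k) / 2 := by
  have hc : ∀ k, 0 ≤ γ k ^ (r - 1) := fun k => (rpow_pos_of_pos (hγ k) _).le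
  have hcmono : Monotone fun k => γ k ^ (r - 1) := fun k l hkl =>
    rpow_le_rpow_of_nonpos (hγ l) (hγanti hkl) (by linarith)
  have hterm : ∀ k, γ k ^ r * a k ≤
      (γ k ^ (r - 1) * (d k - d (k + 1)) + γ k ^ (r - 1) * e k) / 2 := fun k => by
    have hsplit : γ k ^ r = γ k ^ (r - 1) * γ k := by
      rw [← rpow_add_one (hγ k).ne', sub_add_cancel]
    rw [hsplit]
    nlinarith [mul_le_mul_of_nonneg_left (hdesc k) (hc k)]
  calc ∑ k ∈ range N, γ k ^ r * a k
      ≤ ∑ k ∈ range N, (γ k ^ (r - 1) * (d k - d (k + 1)) + γ k ^ (r - 1) * e k) / 2 :=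
        sum_le_sum fun k _ => hterm k
    _ = (∑ k ∈ range N, γ k ^ (r - 1) * (d k - d (k + 1)) +
          ∑ k ∈ range N, γ k ^ (r - 1) * e k) / 2 := by
        rw [← sum_div, sum_add_distrib]
    _ ≤ _ := by
        gcongr
        exact sum_mul_sub_succ_le hc hcmono hdD hd N

section StepSizes

variable {γ lam : ℕ → ℝ} {γ0 lam0 p β r : ℝ}

theorem rpow_eq_of_stepSize (hγ0 : 0 < γ0) (hγ : ∀ k, γ k = γ0 / ((k : ℝ) + 1) ^ p) (s : ℝ)
    (k : ℕ) : γ k ^ s = γ0 ^ s * ((k : ℝ) + 1) ^ (-(p * s)) := by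
  have hbase : (0 : ℝ) ≤ (k : ℝ) + 1 := by positivity
  rw [hγ k, div_rpow hγ0.le (rpow_nonneg hbase _), ← rpow_mul hbase, div_eq_mul_inv,
    ← rpow_neg hbase]

theorem rpow_sub_one_mul_le_of_stepSizes (hγ0 : 0 < γ0) (hβp : β ≤ p)
    (hγ : ∀ k, γ k = γ0 / ((k : ℝ) + 1) ^ p) (hlam : ∀ k, lam k = lam0 / ((k : ℝ) + 1) ^ β)
    {A B : ℝ} (hA : 0 ≤ A) (k : ℕ) :
    γ k ^ (r - 1) * (A * γ k ^ 2 + B * (γ k * lam k)) ≤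
      γ0 ^ r * (A * γ0 + B * lam0) * ((k : ℝ) + 1) ^ (-(p * r) - β) := by
  have hbase : (0 : ℝ) < (k : ℝ) + 1 := by positivity
  have hγk : 0 < γ k := by rw [hγ k]; positivity
  have hγle : γ k ≤ γ0 * ((k : ℝ) + 1) ^ (-β) := by
    rw [hγ k, div_eq_mul_inv, ← rpow_neg hbase.le]
    gcongr
    linarith
  have hlamk : lam k = lam0 * ((k : ℝ) + 1) ^ (-β) := by
    rw [hlam k, div_eq_mul_inv, ← rpow_neg hbase.le]
  have hfactor : γ k ^ (r - 1) * (A * γ k ^ 2 + B * (γ k * lam k)) =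
      γ k ^ r * (A * γ k + B * lam k) := by
    rw [← sub_add_cancel r 1, rpow_add_one hγk.ne', sub_add_cancel]
    ring
  rw [hfactor, rpow_eq_of_stepSize hγ0 hγ, sub_eq_add_neg, rpow_add hbase, hlamk]
  calc _ ≤ γ0 ^ r * ((k : ℝ) + 1) ^ (-(p * r)) *
        (A * (γ0 * ((k : ℝ) + 1) ^ (-β)) + B * (lam0 * ((k : ℝ) + 1) ^ (-β))) := by
        gcongr
    _ = _ := by ring

theorem exists_bound_of_stepSizes (hγ0 : 0 < γ0) (hlam0 : 0 < lam0) (hβ : 0 < β) (hβp : β ≤ p)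
    (hpβ : p + β ≤ 1) (hr : r < 1) (hγ : ∀ k, γ k = γ0 / ((k : ℝ) + 1) ^ p)
    (hlam : ∀ k, lam k = lam0 / ((k : ℝ) + 1) ^ β) {A B D : ℝ} (hA : 0 ≤ A) (hB : 0 ≤ B)
    (hD : 0 ≤ D) :
    ∃ C > 0, ∀ N : ℕ, 1 ≤ N →
      (γ (N - 1) ^ (r - 1) * D + ∑ k ∈ range N, γ k ^ (r - 1) * (A * γ k ^ 2 + B * (γ k * lam k)))
        / 2 ≤ C * (N : ℝ) ^ (-β) * ∑ k ∈ range N, γ k ^ r := by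
  have hp : 0 < p := hβ.trans_le hβp
  set q := -(p * r)
  have hq : -1 < q := by nlinarith [mul_pos hp (sub_pos.2 hr)]
  have hqβ : -1 < q - β := by nlinarith [mul_pos hp (sub_pos.2 hr)]
  set c := min 1 (q + 1)⁻¹
  have hc : 0 < c := lt_min one_pos (inv_pos.mpr (by linarith))
  set K := γ0 ^ (r - 1) * D + γ0 ^ r * (A * γ0 + B * lam0) * (1 + (q - β + 1)⁻¹)
  have hK : 0 ≤ K := by
    have : 0 ≤ (q - β + 1)⁻¹ := inv_nonneg.mpr (by linarith)
    positivity
  refine ⟨K / (2 * (γ0 ^ r * c)) + 1, by positivity, fun N hN => ?_⟩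
  have hNpos : (0 : ℝ) < N := by exact_mod_cast hN
  have hlast : γ (N - 1) ^ (r - 1) * D ≤ γ0 ^ (r - 1) * D * (N : ℝ) ^ (q - β + 1) := by
    have hcast : (((N - 1 : ℕ) : ℝ) + 1) = N := by rw [Nat.cast_sub hN]; ring
    rw [rpow_eq_of_stepSize hγ0 hγ, hcast, mul_right_comm]
    gcongr
    · exact_mod_cast hN
    · linarith
  have hsum : ∑ k ∈ range N, γ k ^ (r - 1) * (A * γ k ^ 2 + B * (γ k * lam k)) ≤
      γ0 ^ r * (A * γ0 + B * lam0) * (1 + (q - β + 1)⁻¹) * (N : ℝ) ^ (q - β + 1) := by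
    calc _ ≤ ∑ k ∈ range N, γ0 ^ r * (A * γ0 + B * lam0) * ((k : ℝ) + 1) ^ (q - β) :=
          sum_le_sum fun k _ => rpow_sub_one_mul_le_of_stepSizes hγ0 hβp hγ hlam hA k
      _ ≤ _ := by
          rw [← mul_sum, mul_assoc (γ0 ^ r * (A * γ0 + B * lam0))]
          gcongr
          exact sum_range_rpow_le hqβ N
  have hden : γ0 ^ r * c * (N : ℝ) ^ (q + 1) ≤ ∑ k ∈ range N, γ k ^ r := by
    simp_rw [rpow_eq_of_stepSize hγ0 hγ r, ← mul_sum, mul_assoc]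
    gcongr
    exact mul_rpow_le_sum_range_rpow hq N
  have hsplit : (N : ℝ) ^ (q - β + 1) = (N : ℝ) ^ (q + 1) * (N : ℝ) ^ (-β) := by
    rw [← rpow_add hNpos]; ring_nf
  calc _ ≤ K * (N : ℝ) ^ (q - β + 1) / 2 := by
        gcongr
        linarith
    _ = K / (2 * (γ0 ^ r * c)) * (N : ℝ) ^ (-β) * (γ0 ^ r * c * (N : ℝ) ^ (q + 1)) := by
        rw [hsplit]; field_simp
    _ ≤ (K / (2 * (γ0 ^ r * c)) + 1) * (N : ℝ) ^ (-β) * ∑ k ∈ range N, γ k ^ r := by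
        gcongr
        linarith

theorem exists_sum_rpow_mul_le_of_descent (hγ0 : 0 < γ0) (hlam0 : 0 < lam0) (hβ : 0 < β)
    (hβp : β ≤ p) (hpβ : p + β ≤ 1) (hr : r < 1) (hγ : ∀ k, γ k = γ0 / ((k : ℝ) + 1) ^ p)
    (hlam : ∀ k, lam k = lam0 / ((k : ℝ) + 1) ^ β) {A B D : ℝ} (hA : 0 ≤ A) (hB : 0 ≤ B)
    {a d : ℕ → ℝ} (hdD : ∀ k, d k ≤ D) (hd : ∀ k, 0 ≤ d k)
    (hdesc : ∀ k, 2 * γ k * a k ≤ d k - d (k + 1) + (A * γ k ^ 2 + B * (γ k * lam k))) :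
    ∃ C > 0, ∀ N : ℕ, 1 ≤ N →
      ∑ k ∈ range N, γ k ^ r * a k ≤ C * (N : ℝ) ^ (-β) * ∑ k ∈ range N, γ k ^ r := by
  have hγpos : ∀ k, 0 < γ k := fun k => by rw [hγ k]; positivity
  have hγanti : Antitone γ := antitone_nat_of_succ_le fun k => by
    rw [hγ, hγ]
    gcongr
    · linarith
    · exact k.le_succ
  obtain ⟨C, hC, hbound⟩ := exists_bound_of_stepSizes hγ0 hlam0 hβ hβp hpβ hr hγ hlam hA hB
    ((hd 0).trans (hdD 0))
  exact ⟨C, hC, fun N hN =>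
    (sum_rpow_mul_le_of_descent hγpos hγanti hr.le hdD hd hdesc N).trans (hbound N hN)⟩

end StepSizes

section ProjectedCycle

variable {n m : ℕ} {X : Set (Euc n)} {y : ℕ → Euc n} {d : Fin m → Euc n} {γ : ℝ}

theorem mem_of_projCycle (hy0 : y 0 ∈ X)
    (hstep : ∀ i : Fin m, IsProjOn X (y i - γ • d i) (y (i + 1))) : ∀ i ≤ m, y i ∈ X
  | 0, _ => hy0
  | i + 1, hi => (hstep ⟨i, hi⟩).1

theorem norm_sub_zero_le_of_projCycle (hX : Convex ℝ X) (hy0 : y 0 ∈ X)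
    (hstep : ∀ i : Fin m, IsProjOn X (y i - γ • d i) (y (i + 1))) {G : ℝ} (hγ : 0 ≤ γ)
    (hd : ∀ i, ‖d i‖ ≤ G) : ∀ i ≤ m, ‖y i - y 0‖ ≤ i * (γ * G) := by
  intro i hi
  induction i with
  | zero => simp
  | succ i ih =>
    have hmove : ‖y (i + 1) - y i‖ ≤ γ * G := by
      have := (hstep ⟨i, hi⟩).norm_sub_le hX (mem_of_projCycle hy0 hstep i (i.le_succ.trans hi))
      rw [sub_sub_cancel_left, norm_neg, norm_smul, Real.norm_of_nonneg hγ] at this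
      exact this.trans (mul_le_mul_of_nonneg_left (hd _) hγ)
    calc ‖y (i + 1) - y 0‖ ≤ ‖y (i + 1) - y i‖ + ‖y i - y 0‖ :=
          norm_sub_le_norm_sub_add_norm_sub _ _ _
      _ ≤ γ * G + i * (γ * G) := add_le_add hmove (ih (i.le_succ.trans hi))
      _ = ((i + 1 : ℕ) : ℝ) * (γ * G) := by push_cast; ring

theorem norm_sub_sq_le_of_projCycle (hX : Convex ℝ X)
    (hstep : ∀ i : Fin m, IsProjOn X (y i - γ • d i) (y (i + 1))) {z : Euc n} (hz : z ∈ X)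
    {G : ℝ} (hd : ∀ i, ‖d i‖ ≤ G) :
    ‖y m - z‖ ^ 2 ≤ ‖y 0 - z‖ ^ 2 - 2 * γ * ∑ i, ⟪d i, y i - z⟫ + m * (γ * G) ^ 2 := by
  have hone : ∀ i : Fin m, ‖y (i + 1) - z‖ ^ 2 - ‖y i - z‖ ^ 2 ≤
      -(2 * γ * ⟪d i, y i - z⟫) + (γ * G) ^ 2 := fun i => by
    have := (hstep i).norm_sub_sq_le_of_step hX hz
    nlinarith [pow_le_pow_left₀ (norm_nonneg _) (hd i) 2]
  have htele : ∑ i : Fin m, (‖y (i + 1) - z‖ ^ 2 - ‖y i - z‖ ^ 2) = ‖y m - z‖ ^ 2 - ‖y 0 - z‖ ^ 2 :=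
    (Fin.sum_univ_eq_sum_range (fun i => ‖y (i + 1) - z‖ ^ 2 - ‖y i - z‖ ^ 2) m).trans
      (sum_range_sub (fun i => ‖y i - z‖ ^ 2) m)
  have := Finset.sum_le_sum fun i (_ : i ∈ Finset.univ) => hone i
  rw [htele, sum_add_distrib, sum_neg_distrib, ← mul_sum, sum_const, card_univ, Fintype.card_fin,
    nsmul_eq_mul] at this
  linarith

end ProjectedCycle

theorem irig_cycle_descent {n m : ℕ} (hm : 0 < m) {X : Set (Euc n)} (hX : Convex ℝ X) {R : ℝ}
    (hR : ∀ u ∈ X, ∀ w ∈ X, ‖u - w‖ ≤ R) {fi : Fin m → Euc n → ℝ} {gf : Fin m → Euc n → Euc n}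
    {gh : Euc n → Euc n} {Cf Ch : ℝ}
    (hgf : ∀ i, ∀ u ∈ X, IsSubgradAt (fi i) u (gf i u) ∧ ‖gf i u‖ ≤ Cf)
    (hgh : ∀ u ∈ X, ‖gh u‖ ≤ Ch) {γ lam G : ℝ} (hγ : 0 ≤ γ) (hlam : 0 ≤ lam)
    (hG : Cf + lam * Ch ≤ G) {y : ℕ → Euc n} (hy0 : y 0 ∈ X)
    (hstep : ∀ i (hi : i < m),
      IsProjOn X (y i - γ • (gf ⟨i, hi⟩ (y i) + (lam / m) • gh (y i))) (y (i + 1)))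
    {z : Euc n} (hz : z ∈ X) :
    2 * γ * ∑ i, (fi i (y 0) - fi i z) ≤ ‖y 0 - z‖ ^ 2 - ‖y m - z‖ ^ 2 +
      (m * (G ^ 2 + 2 * m * Cf * G) * γ ^ 2 + 2 * Ch * R * (γ * lam)) := by
  set d : Fin m → Euc n := fun i => gf i (y i) + (lam / m) • gh (y i)
  have hstep' : ∀ i : Fin m, IsProjOn X (y i - γ • d i) (y (i + 1)) := fun i => hstep i i.isLt
  have hyX : ∀ i : Fin m, y i ∈ X := fun i => mem_of_projCycle hy0 hstep' i i.isLt.le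
  have hmR : (1 : ℝ) ≤ m := by exact_mod_cast hm
  have hCf : 0 ≤ Cf := (norm_nonneg _).trans (hgf ⟨0, hm⟩ z hz).2
  have hCh : 0 ≤ Ch := (norm_nonneg _).trans (hgh z hz)
  have hlamm : 0 ≤ lam / m := by positivity
  have hG0 : 0 ≤ G := by nlinarith
  have hd : ∀ i, ‖d i‖ ≤ G := fun i => by
    calc ‖d i‖ ≤ ‖gf i (y i)‖ + lam / m * ‖gh (y i)‖ := by
          rw [← Real.norm_of_nonneg hlamm, ← norm_smul]; exact norm_add_le _ _
      _ ≤ Cf + lam * Ch := by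
          gcongr
          · exact (hgf i _ (hyX i)).2
          · exact div_le_self hlam hmR
          · exact hgh _ (hyX i)
      _ ≤ G := hG
  have hinner : ∀ i, fi i (y 0) - fi i z - m * Cf * (γ * G) - lam / m * (Ch * R) ≤
      ⟪d i, y i - z⟫ := fun i => by
    have hlip := (hgf i _ hy0).1.sub_le_norm_mul_s17 (y i)
    have hdrift : ‖y 0 - y i‖ ≤ m * (γ * G) := by
      rw [norm_sub_rev]
      exact (norm_sub_zero_le_of_projCycle hX hy0 hstep' hγ hd i i.isLt.le).trans
        (by gcongr; exact_mod_cast i.isLt.le)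
    have hsub := (hgf i _ (hyX i)).1.sub_le_inner z
    have hcs : -(Ch * R) ≤ ⟪gh (y i), y i - z⟫ := neg_le_of_abs_le <|
      (abs_real_inner_le_norm _ _).trans
        (mul_le_mul (hgh _ (hyX i)) (hR _ (hyX i) z hz) (norm_nonneg _) hCh)
    have hsplit : ⟪d i, y i - z⟫ = ⟪gf i (y i), y i - z⟫ + lam / m * ⟪gh (y i), y i - z⟫ := by
      rw [inner_add_left, real_inner_smul_left]
    nlinarith [mul_le_mul (hgf i _ hy0).2 hdrift (norm_nonneg _) hCf,
      mul_le_mul_of_nonneg_left hcs hlamm]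
  have hlow : ∑ i, (fi i (y 0) - fi i z) - m * (m * Cf * (γ * G)) - lam * (Ch * R) ≤
      ∑ i, ⟪d i, y i - z⟫ := by
    have := Finset.sum_le_sum fun i (_ : i ∈ Finset.univ) => hinner i
    rw [sum_sub_distrib, sum_sub_distrib, sum_const, sum_const, card_univ, Fintype.card_fin,
      nsmul_eq_mul, nsmul_eq_mul] at this
    have hcancel : (m : ℝ) * (lam / m * (Ch * R)) = lam * (Ch * R) := by field_simp
    linarith
  have hcycle := norm_sub_sq_le_of_projCycle hX hstep' hz hd
  nlinarith [mul_le_mul_of_nonneg_left hlow (by positivity : (0 : ℝ) ≤ 2 * γ)]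

theorem irig_rate_general {n : ℕ} (X : Set (Euc n))
    (hXcp : IsCompact X) (hXcv : Convex ℝ X)
    (m : ℕ) (hm : 1 ≤ m)
    (fi : Fin m → Euc n → ℝ) (hfi : ∀ i, ConvexOn ℝ Set.univ (fi i))
    (f : Euc n → ℝ) (hfdef : f = fun y => ∑ i, fi i y)
    (h : Euc n → ℝ)
    (Cf Ch : ℝ)
    (gf : Fin m → Euc n → Euc n) (gh : Euc n → Euc n)
    (hgf : ∀ i, ∀ y ∈ X, IsSubgradAt (fi i) y (gf i y) ∧ ‖gf i y‖ ≤ Cf)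
    (hgh : ∀ y ∈ X, IsSubgradAt h y (gh y) ∧ ‖gh y‖ ≤ Ch)
    (γ lam : ℕ → ℝ) (hγpos : ∀ k, 0 < γ k) (hlampos : ∀ k, 0 < lam k)
    (x : ℕ → Euc n) (xi : ℕ → ℕ → Euc n)
    (hx0 : x 0 ∈ X) (hxi0 : ∀ k, xi k 0 = x k)
    (hrec : ∀ k, ∀ i (hi : i < m),
      IsProjOn X
        (xi k i - γ k • (gf ⟨i, hi⟩ (xi k i) + (lam k / (m : ℝ)) • gh (xi k i)))
        (xi k (i + 1)))
    (hnext : ∀ k, x (k + 1) = xi k m)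
    (ε r γ0 lam0 : ℝ) (hε0 : 0 < ε) (hε1 : ε < 0.5) (hr : r < 1)
    (hγ0 : 0 < γ0) (hlam0 : 0 < lam0)
    (hγdef : ∀ k, γ k = γ0 / ((k : ℝ) + 1) ^ (0.5 + 0.5 * ε))
    (hlamdef : ∀ k, lam k = lam0 / ((k : ℝ) + 1) ^ (0.5 - ε))
    (fstar : ℝ) (xstar : Euc n) (hxstar : xstar ∈ X ∧ ∀ y ∈ X, f xstar ≤ f y)
    (hfstar : fstar = f xstar) :
    ∃ C > 0, ∃ N0 : ℕ, ∀ N ≥ N0,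
      f (∑ k ∈ Finset.range N, (γ k ^ r / ∑ i ∈ Finset.range N, γ i ^ r) • x k) - fstar ≤
        C * (N : ℝ) ^ (-(0.5 - ε)) := by
  obtain ⟨hxstarX, -⟩ := hxstar
  obtain ⟨R, hR⟩ : ∃ R, ∀ u ∈ X, ∀ w ∈ X, ‖u - w‖ ≤ R := by
    obtain ⟨R, hR⟩ := Metric.isBounded_iff.mp hXcp.isBounded
    exact ⟨R, fun u hu w hw => by simpa [dist_eq_norm] using hR hu hw⟩
  have hxX : ∀ k, x k ∈ X := by
    intro k
    induction k with
    | zero => exact hx0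
    | succ k ih =>
      exact hnext k ▸ mem_of_projCycle (hxi0 k ▸ ih) (fun i => hrec k i i.isLt) m le_rfl
  have hCf : 0 ≤ Cf := (norm_nonneg _).trans (hgf ⟨0, hm⟩ xstar hxstarX).2
  have hCh : 0 ≤ Ch := (norm_nonneg _).trans (hgh xstar hxstarX).2
  have hR0 : 0 ≤ R := (norm_nonneg _).trans (hR xstar hxstarX xstar hxstarX)
  set G := Cf + lam0 * Ch
  have hdesc : ∀ k, 2 * γ k * (f (x k) - fstar) ≤ ‖x k - xstar‖ ^ 2 - ‖x (k + 1) - xstar‖ ^ 2 +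
      (m * (G ^ 2 + 2 * m * Cf * G) * γ k ^ 2 + 2 * Ch * R * (γ k * lam k)) := fun k => by
    have hlam : lam k ≤ lam0 := by
      rw [hlamdef]
      exact div_le_self hlam0.le (one_le_rpow (by simp) (by norm_num; linarith))
    have := irig_cycle_descent hm hXcv hR hgf (fun u hu => (hgh u hu).2) (hγpos k).le
      (hlampos k).le (G := G) (add_le_add_right (mul_le_mul_of_nonneg_right hlam hCh) Cf)
      (hxi0 k ▸ hxX k) (hrec k) hxstarX
    rw [hxi0, ← hnext, sum_sub_distrib] at this
    rw [hfstar, hfdef]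
    exact this
  obtain ⟨C, hC, hbound⟩ := exists_sum_rpow_mul_le_of_descent (A := m * (G ^ 2 + 2 * m * Cf * G))
    (B := 2 * Ch * R) hγ0 hlam0 (by norm_num; linarith) (by linarith) (by linarith) hr hγdef
    hlamdef (by positivity) (by positivity)
    (fun k => pow_le_pow_left₀ (norm_nonneg _) (hR _ (hxX k) _ hxstarX) 2) (fun k => sq_nonneg _)
    hdesc
  refine ⟨C, hC, 1, fun N hN => ?_⟩
  have hW : 0 < ∑ i ∈ range N, γ i ^ r :=
    sum_pos (fun i _ => rpow_pos_of_pos (hγpos i) r) (nonempty_range_iff.mpr (by omega))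
  have hf : ConvexOn ℝ univ f := hfdef ▸ ConvexOn.finset_sum convex_univ fun i _ => hfi i
  calc _ ≤ (∑ k ∈ range N, γ k ^ r * (f (x k) - fstar)) / ∑ i ∈ range N, γ i ^ r :=
        hf.map_sum_div_smul_sub_le (fun i _ => (rpow_pos_of_pos (hγpos i) r).le) hW x fstar
    _ ≤ C * (N : ℝ) ^ (-(0.5 - ε)) := by
        rw [div_le_iff₀ hW]
        exact hbound N hN

/-- rate of convergence of IR-IG in terms of the lower level objective. -/
theorem irig_rate {n : ℕ} (X : Set (Euc n))
    (hXne : X.Nonempty) (hXcp : IsCompact X) (hXcv : Convex ℝ X)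
    (m : ℕ) (hm : 1 ≤ m)
    (fi : Fin m → Euc n → ℝ) (hfi : ∀ i, ConvexOn ℝ Set.univ (fi i))
    (f : Euc n → ℝ) (hfdef : f = fun y => ∑ i, fi i y)
    (h : Euc n → ℝ) (μ : ℝ) (hμ : 0 < μ) (hh : StrongConvexOn Set.univ μ h)
    (Cf Ch : ℝ)
    (gf : Fin m → Euc n → Euc n) (gh : Euc n → Euc n)
    (hgf : ∀ i, ∀ y ∈ X, IsSubgradAt (fi i) y (gf i y) ∧ ‖gf i y‖ ≤ Cf)
    (hgh : ∀ y ∈ X, IsSubgradAt h y (gh y) ∧ ‖gh y‖ ≤ Ch)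
    (hCf : ∀ i, ∀ y ∈ X, ∀ g, IsSubgradAt (fi i) y g → ‖g‖ ≤ Cf)
    (hChb : ∀ y ∈ X, ∀ g, IsSubgradAt h y g → ‖g‖ ≤ Ch)
    (γ lam : ℕ → ℝ) (hγpos : ∀ k, 0 < γ k) (hlampos : ∀ k, 0 < lam k)
    (x : ℕ → Euc n) (xi : ℕ → ℕ → Euc n)
    (hx0 : x 0 ∈ X) (hxi0 : ∀ k, xi k 0 = x k)
    (hrec : ∀ k, ∀ i (hi : i < m),
      IsProjOn X
        (xi k i - γ k • (gf ⟨i, hi⟩ (xi k i) + (lam k / (m : ℝ)) • gh (xi k i)))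
        (xi k (i + 1)))
    (hnext : ∀ k, x (k + 1) = xi k m)
    (ε r γ0 lam0 : ℝ) (hε0 : 0 < ε) (hε1 : ε < 0.5) (hr : r < 1)
    (hγ0 : 0 < γ0) (hlam0 : 0 < lam0) (hinit : γ0 * lam0 * μ ≤ 2 * (m : ℝ))
    (hγdef : ∀ k, γ k = γ0 / ((k : ℝ) + 1) ^ (0.5 + 0.5 * ε))
    (hlamdef : ∀ k, lam k = lam0 / ((k : ℝ) + 1) ^ (0.5 - ε))
    (fstar : ℝ) (xstar : Euc n) (hxstar : xstar ∈ X ∧ ∀ y ∈ X, f xstar ≤ f y)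
    (hfstar : fstar = f xstar) :
    ∃ C > 0, ∃ N0 : ℕ, ∀ N ≥ N0,
      f (∑ k ∈ Finset.range N, (γ k ^ r / ∑ i ∈ Finset.range N, γ i ^ r) • x k) - fstar ≤
        C * (N : ℝ) ^ (-(0.5 - ε)) :=
  irig_rate_general X hXcp hXcv m hm fi hfi f hfdef h Cf Ch gf gh hgf hgh γ lam hγpos hlampos x xi
    hx0 hxi0 hrec hnext ε r γ0 lam0 hε0 hε1 hr hγ0 hlam0 hγdef hlamdef fstar xstar hxstar hfstar
end
end
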